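/- arXiv:1502.02539 — 6 statements merged into one kernel-verified Lean document; each statement's English description precedes it below -/
import Mathlib

section
/- Let x ∈ (0,1] and let (x_j)_{j≥1} be any binary expansion of x, i.e. x_j ∈ {0,1} for all j and x = Σ_{j=1}^∞ x_j·2^{−j}. Then x·log₂(1/x) ≤ Σ_{j=1}^∞ j·x_j·2^{−j} ≤ x·log₂(1/x) + 2x. -/
/-!
A digit `b j = 1` carries weight `2⁻⁽ʲ⁺¹⁾ ≤ x`, so its depth `j + 1` is at least `log₂ (1 / x)`;
summing over the digits gives the lower bound. For the upper bound let `k` be the position of the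
first digit `1`, so that `x ≤ 2⁻ᵏ` and hence `k ≤ log₂ (1 / x)`. For `j = k + i` one has
`(j + 1) b j ≤ (k + 2) b j + (i - 1)` (with equality at `i = 0`, where `b k = 1`), and the
corrections cancel because `∑ (i - 1) 2⁻⁽ⁱ⁺¹⁾ = 0`. So the sum is at most
`(k + 2) x ≤ x log₂ (1 / x) + 2 x`.
-/

open Real

namespace BinaryExpansion

theorem tsum_nat_add_eq_of_eq_zero {M : Type*} [AddCommMonoid M] [TopologicalSpace M]
    {f : ℕ → M} {k : ℕ} (hf : ∀ j < k, f j = 0) : ∑' i, f (i + k) = ∑' j, f j :=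
  (add_left_injective k).tsum_eq fun j hj =>
    ⟨j - k, Nat.sub_add_cancel (not_lt.1 fun hjk => hj (hf j hjk))⟩

theorem logb_one_div_le_of_one_div_two_pow_le {x : ℝ} {n : ℕ} (h : 1 / 2 ^ n ≤ x) :
    logb 2 (1 / x) ≤ n := by
  have hx : 0 < x := lt_of_lt_of_le (by positivity) h
  rw [logb_le_iff_le_rpow one_lt_two (by positivity), rpow_natCast, div_le_iff₀ hx]
  rwa [div_le_iff₀ (by positivity), mul_comm] at h

theorem le_logb_one_div_of_le_one_div_two_pow {x : ℝ} {n : ℕ} (hx : 0 < x)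
    (h : x ≤ 1 / 2 ^ n) : (n : ℝ) ≤ logb 2 (1 / x) := by
  rw [le_logb_iff_rpow_le one_lt_two (by positivity), rpow_natCast, le_div_iff₀ hx]
  rwa [le_div_iff₀ (by positivity), mul_comm] at h

theorem hasSum_one_div_two_pow (k : ℕ) :
    HasSum (fun i : ℕ => 1 / (2 : ℝ) ^ (i + k + 1)) (1 / 2 ^ k) := by
  have e : (fun i : ℕ => 1 / 2 ^ k / 2 / (2 : ℝ) ^ i) = fun i => 1 / 2 ^ (i + k + 1) := by
    funext i
    field_simp
    ring
  simpa only [e] using hasSum_geometric_two' (1 / (2 : ℝ) ^ k)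

theorem hasSum_coe_div_two_pow (k : ℕ) :
    HasSum (fun i : ℕ => (i : ℝ) / 2 ^ (i + k + 1)) (1 / 2 ^ k) := by
  have h := (hasSum_coe_mul_geometric_of_norm_lt_one
    (show ‖(1 / 2 : ℝ)‖ < 1 by norm_num)).div_const (2 ^ (k + 1))
  have e : (fun i : ℕ => (i : ℝ) * (1 / 2) ^ i / 2 ^ (k + 1)) =
      fun i : ℕ => (i : ℝ) / 2 ^ (i + k + 1) := by
    funext i
    rw [one_div_pow]
    field_simp
    ring
  have v : (1 / 2 / (1 - 1 / 2) ^ 2 / 2 ^ (k + 1) : ℝ) = 1 / 2 ^ k := by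
    field_simp
    ring
  rwa [e, v] at h

variable {b : ℕ → ℝ}

theorem summable_digit_div_two_pow (hb : ∀ j, b j = 0 ∨ b j = 1) :
    Summable fun j : ℕ => b j / 2 ^ (j + 1) := by
  refine Summable.of_nonneg_of_le (fun j => ?_) (fun j => ?_) (hasSum_one_div_two_pow 0).summable
  · rcases hb j with h | h <;> simp [h]
  · rcases hb j with h | h <;> simp [h]

theorem summable_succ_mul_digit_div_two_pow (hb : ∀ j, b j = 0 ∨ b j = 1) :
    Summable fun j : ℕ => ((j : ℝ) + 1) * b j / 2 ^ (j + 1) := by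
  refine Summable.of_nonneg_of_le (fun j => ?_) (fun j => ?_)
    ((hasSum_coe_div_two_pow 0).add (hasSum_one_div_two_pow 0)).summable
  · rcases hb j with h | h <;> simp [h]
    positivity
  · rcases hb j with h | h <;> simp [h, add_div]
    positivity

theorem digit_div_two_pow_le (hb : ∀ j, b j = 0 ∨ b j = 1) {x : ℝ}
    (hexp : x = ∑' j : ℕ, b j / 2 ^ (j + 1)) (j : ℕ) : b j / 2 ^ (j + 1) ≤ x :=
  hexp ▸ (summable_digit_div_two_pow hb).le_tsum j fun i _ => by
    rcases hb i with h | h <;> simp [h]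

theorem tsum_digit_div_two_pow_le (hb : ∀ j, b j = 0 ∨ b j = 1) {k : ℕ}
    (hzero : ∀ j < k, b j = 0) : ∑' j : ℕ, b j / 2 ^ (j + 1) ≤ 1 / 2 ^ k := by
  rw [← tsum_nat_add_eq_of_eq_zero (fun j hj => by simp [hzero j hj])]
  refine hasSum_le (fun i => ?_)
    ((summable_nat_add_iff k).2 (summable_digit_div_two_pow hb)).hasSum (hasSum_one_div_two_pow k)
  rcases hb (i + k) with h | h <;> simp [h]

theorem tsum_succ_mul_digit_div_two_pow_le (hb : ∀ j, b j = 0 ∨ b j = 1) {k : ℕ} (hk : b k = 1)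
    (hzero : ∀ j < k, b j = 0) :
    ∑' j : ℕ, ((j : ℝ) + 1) * b j / 2 ^ (j + 1) ≤ (k + 2) * ∑' j : ℕ, b j / 2 ^ (j + 1) := by
  rw [← tsum_nat_add_eq_of_eq_zero (f := fun j : ℕ => ((j : ℝ) + 1) * b j / 2 ^ (j + 1))
      (fun j hj => by simp [hzero j hj]),
    ← tsum_nat_add_eq_of_eq_zero (f := fun j : ℕ => b j / 2 ^ (j + 1))
      (fun j hj => by simp [hzero j hj])]
  have hcorrection : HasSum (fun i : ℕ => ((i : ℝ) - 1) / 2 ^ (i + k + 1)) 0 := by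
    simpa only [sub_div, sub_self] using (hasSum_coe_div_two_pow k).sub (hasSum_one_div_two_pow k)
  have hbound := (((summable_nat_add_iff k).2 (summable_digit_div_two_pow hb)).hasSum.mul_left
    ((k : ℝ) + 2)).add hcorrection
  rw [add_zero] at hbound
  refine hasSum_le (fun i => ?_)
    ((summable_nat_add_iff k).2 (summable_succ_mul_digit_div_two_pow hb)).hasSum hbound
  rw [mul_div_assoc', ← add_div]
  gcongr
  push_cast
  rcases i with _ | i
  · simp only [zero_add, hk]
    linarith
  · rcases hb (i + 1 + k) with h | h
    · simp [h]
    · simp only [h]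
      linarith

theorem mul_logb_le_tsum_succ_mul_digit (hb : ∀ j, b j = 0 ∨ b j = 1) {x : ℝ}
    (hexp : x = ∑' j : ℕ, b j / 2 ^ (j + 1)) :
    x * logb 2 (1 / x) ≤ ∑' j : ℕ, ((j : ℝ) + 1) * b j / 2 ^ (j + 1) := by
  have hterm (j : ℕ) :
      logb 2 (1 / x) * (b j / 2 ^ (j + 1)) ≤ ((j : ℝ) + 1) * b j / 2 ^ (j + 1) := by
    rcases hb j with h | h
    · simp [h]
    · have hlog := logb_one_div_le_of_one_div_two_pow_le (h ▸ digit_div_two_pow_le hb hexp j)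
      rw [h, mul_one, mul_one_div]
      gcongr
      exact_mod_cast hlog
  calc x * logb 2 (1 / x) = ∑' j : ℕ, logb 2 (1 / x) * (b j / 2 ^ (j + 1)) := by
        rw [tsum_mul_left, ← hexp, mul_comm]
    _ ≤ _ := ((summable_digit_div_two_pow hb).mul_left _).tsum_le_tsum hterm
        (summable_succ_mul_digit_div_two_pow hb)

theorem tsum_succ_mul_digit_le_mul_logb_add (hb : ∀ j, b j = 0 ∨ b j = 1) {x : ℝ}
    (hexp : x = ∑' j : ℕ, b j / 2 ^ (j + 1)) :
    ∑' j : ℕ, ((j : ℝ) + 1) * b j / 2 ^ (j + 1) ≤ x * logb 2 (1 / x) + 2 * x := by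
  by_cases hone : ∃ k, b k = 1
  · classical
    obtain ⟨k, hk, hzero⟩ : ∃ k, b k = 1 ∧ ∀ j < k, b j = 0 :=
      ⟨Nat.find hone, Nat.find_spec hone, fun j hj => (hb j).resolve_right (Nat.find_min hone hj)⟩
    have hx : 0 < x := lt_of_lt_of_le (by positivity) (hk ▸ digit_div_two_pow_le hb hexp k)
    have hlog := le_logb_one_div_of_le_one_div_two_pow hx (hexp ▸ tsum_digit_div_two_pow_le hb hzero)
    calc _ ≤ (k + 2) * x := hexp ▸ tsum_succ_mul_digit_div_two_pow_le hb hk hzero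
      _ ≤ x * logb 2 (1 / x) + 2 * x := by nlinarith
  · have hzero (j : ℕ) : b j = 0 := (hb j).resolve_right fun h => hone ⟨j, h⟩
    simp [hexp, hzero]

end BinaryExpansion

theorem binary_expansion_expected_depth_bounds_general
    (x : ℝ)
    (b : ℕ → ℝ) (hb : ∀ j, b j = 0 ∨ b j = 1)
    (hexp : x = ∑' j : ℕ, b j / 2 ^ (j + 1)) :
    x * Real.logb 2 (1 / x) ≤ (∑' j : ℕ, ((j : ℝ) + 1) * b j / 2 ^ (j + 1)) ∧
      (∑' j : ℕ, ((j : ℝ) + 1) * b j / 2 ^ (j + 1)) ≤ x * Real.logb 2 (1 / x) + 2 * x :=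
  ⟨BinaryExpansion.mul_logb_le_tsum_succ_mul_digit hb hexp,
    BinaryExpansion.tsum_succ_mul_digit_le_mul_logb_add hb hexp⟩

/-- If `x ∈ (0,1]` and `(x_j)_{j≥1}` is a binary expansion of `x`
(here `b j` is the digit `x_{j+1}`), then
`x·log₂(1/x) ≤ Σ_{j≥1} j·x_j·2^{−j} ≤ x·log₂(1/x) + 2x`. -/
theorem binary_expansion_expected_depth_bounds
    (x : ℝ) (hx : x ∈ Set.Ioc (0 : ℝ) 1)
    (b : ℕ → ℝ) (hb : ∀ j, b j = 0 ∨ b j = 1)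
    (hexp : x = ∑' j : ℕ, b j / 2 ^ (j + 1)) :
    x * Real.logb 2 (1 / x) ≤ (∑' j : ℕ, ((j : ℝ) + 1) * b j / 2 ^ (j + 1)) ∧
      (∑' j : ℕ, ((j : ℝ) + 1) * b j / 2 ^ (j + 1)) ≤ x * Real.logb 2 (1 / x) + 2 * x :=
  binary_expansion_expected_depth_bounds_general x b hb hexp
end

section
/- (Han–Hoshi bound.) Let (p_i)_{i≥1} be a probability vector and let (α_i)_{i≥1}, (β_i)_{i≥1} be nonnegative sequences with α_i + β_i = p_i for every i. For each i let ((α_i)_j)_{j≥1} and ((β_i)_j)_{j≥1} be binary expansions of α_i and β_i (digits in {0,1}, α_i = Σ_j (α_i)_j 2^{−j}, β_i = Σ_j (β_i)_j 2^{−j}). Then the quantity E(T) = Σ_i Σ_{j=1}^∞ j·((α_i)_j + (β_i)_j)·2^{−j} satisfies Σ_i p_i·log₂(1/p_i) ≤ E(T) ≤ Σ_i p_i·log₂(1/p_i) + 3. -/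
/-!
Both bounds hold symbol by symbol. Let `x` be the value of a binary expansion with digits `d`
and `θ = log₂ (1/x)`. A digit `1` in position `j + 1` is a leaf of mass `2^{-(j+1)} ≤ x`, so
its depth `j + 1` is at least `θ`; summing gives `x θ ≤ ∑ (j+1) d_j 2^{-(j+1)}`. Conversely,
for every `L` the depths exceed `L` only on a tail dominated by the all-ones expansion, which
bounds the cost by `L x + 2^{1-L}`; taking `L = ⌈θ⌉` and using convexity of `δ ↦ 2^{-δ}` on
`[0, 1]` turns this into `x θ + 2x`. Splitting `p = α + β` costs at most one extra bit
(concavity of `t ↦ -t log t`), and summing over the symbols gives `H(p) ≤ E(T) ≤ H(p) + 3`,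
the two sides being summable together.
-/

open Real

lemma hasSum_succ_div_two_pow : HasSum (fun j : ℕ => ((j : ℝ) + 1) / 2 ^ (j + 1)) 2 := by
  have h := hasSum_coe_mul_geometric_of_norm_lt_one (r := (1 / 2 : ℝ)) (by norm_num)
  rw [← hasSum_nat_add_iff' 1] at h
  norm_num at h
  simpa only [div_eq_mul_inv, one_mul, inv_pow] using h

lemma two_rpow_neg_le_one_sub_half {δ : ℝ} (h0 : 0 ≤ δ) (h1 : δ ≤ 1) :
    (2 : ℝ) ^ (-δ) ≤ 1 - δ / 2 := by
  have h := (convexOn_rpow_left (b := 2) zero_lt_two).2 (Set.mem_univ 0) (Set.mem_univ (-1))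
    (sub_nonneg.2 h1) h0 (by ring)
  calc (2 : ℝ) ^ (-δ) = 2 ^ ((1 - δ) • (0 : ℝ) + δ • (-1 : ℝ)) := by simp
    _ ≤ (1 - δ) • (2 : ℝ) ^ (0 : ℝ) + δ • (2 : ℝ) ^ (-1 : ℝ) := h
    _ = 1 - δ / 2 := by norm_num; ring

lemma exists_nat_mul_add_two_div_two_pow_le {x : ℝ} (hx0 : 0 < x) (hx1 : x ≤ 1) :
    ∃ L : ℕ, L * x + 2 / 2 ^ L ≤ x * logb 2 (1 / x) + 2 * x := by
  set θ := logb 2 (1 / x)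
  have hθ : 0 ≤ θ := logb_nonneg one_lt_two (one_le_one_div hx0 hx1)
  refine ⟨⌈θ⌉₊, ?_⟩
  set δ := (⌈θ⌉₊ : ℝ) - θ with hδ
  have hδ0 : 0 ≤ δ := sub_nonneg.2 (Nat.le_ceil θ)
  have hδ1 : δ ≤ 1 := by linarith [Nat.ceil_lt_add_one hθ]
  have hx : x = 2 ^ (-θ) := by
    rw [rpow_neg zero_le_two, rpow_logb zero_lt_two (by norm_num) (by positivity), one_div,
      inv_inv]
  have hpow : 2 / (2 : ℝ) ^ ⌈θ⌉₊ = 2 * x * 2 ^ (-δ) := by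
    rw [hx, mul_assoc, ← rpow_add zero_lt_two, ← rpow_natCast, div_eq_mul_inv,
      ← rpow_neg zero_le_two, hδ]
    ring_nf
  rw [hpow]
  nlinarith [two_rpow_neg_le_one_sub_half hδ0 hδ1]

lemma negMulLog_add_le {a b : ℝ} (ha : 0 ≤ a) (hb : 0 ≤ b) :
    negMulLog (a + b) ≤ negMulLog a + negMulLog b := by
  have key {x y : ℝ} (hx : 0 ≤ x) (hxy : x ≤ y) : x * log x ≤ x * log y := by
    rcases hx.eq_or_lt with rfl | hx
    · simp
    · exact mul_le_mul_of_nonneg_left (log_le_log hx hxy) hx.le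
  simp only [negMulLog, neg_mul]
  nlinarith [key ha (le_add_of_nonneg_right hb), key hb (le_add_of_nonneg_left ha)]

lemma negMulLog_add_negMulLog_le {a b : ℝ} (ha : 0 ≤ a) (hb : 0 ≤ b) :
    negMulLog a + negMulLog b ≤ negMulLog (a + b) + (a + b) * log 2 := by
  -- concavity at `2a` and `2b`, where `negMulLog (2 * t) = 2 * negMulLog t - 2 * t * log 2`
  have h := concaveOn_negMulLog.2 (Set.mem_Ici.2 (by positivity : 0 ≤ 2 * a))
    (Set.mem_Ici.2 (by positivity : 0 ≤ 2 * b)) (by norm_num : (0 : ℝ) ≤ 1 / 2)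
    (by norm_num : (0 : ℝ) ≤ 1 / 2) (by norm_num)
  simp only [smul_eq_mul, negMulLog_mul] at h
  simp only [negMulLog] at h ⊢
  ring_nf at h ⊢
  linarith

lemma mul_logb_one_div_eq (x : ℝ) : x * logb 2 (1 / x) = negMulLog x / log 2 := by
  rw [negMulLog, logb, one_div, log_inv]; ring

lemma mem_Icc_of_eq_zero_or_eq_one {x : ℝ} (h : x = 0 ∨ x = 1) : x ∈ Set.Icc (0 : ℝ) 1 := by
  rcases h with rfl | rfl <;> norm_num

noncomputable def binaryValue (d : ℕ → ℝ) : ℝ := ∑' j, d j / 2 ^ (j + 1)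

/-- Digit `j` is a leaf at depth `j + 1` of the DDG tree, so this is the expected number of fair
bits spent on the leaves of the expansion `d`. -/
noncomputable def binaryCost (d : ℕ → ℝ) : ℝ :=
  ∑' j : ℕ, ((j : ℝ) + 1) * d j / 2 ^ (j + 1)

section BinaryExpansion

variable {d : ℕ → ℝ}

lemma summable_div_two_pow (hd : ∀ j, d j ∈ Set.Icc (0 : ℝ) 1) :
    Summable fun j => d j / 2 ^ (j + 1) :=
  (hasSum_geometric_two' 1).summable.of_nonneg_of_le (fun j => div_nonneg (hd j).1 (by positivity))
    fun j => by rw [div_div, ← pow_succ']; gcongr; exact (hd j).2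

lemma summable_succ_mul_div_two_pow (hd : ∀ j, d j ∈ Set.Icc (0 : ℝ) 1) :
    Summable fun j : ℕ => ((j : ℝ) + 1) * d j / 2 ^ (j + 1) :=
  hasSum_succ_div_two_pow.summable.of_nonneg_of_le
    (fun j => div_nonneg (mul_nonneg (by positivity) (hd j).1) (by positivity))
    fun j => by gcongr; exact mul_le_of_le_one_right (by positivity) (hd j).2

lemma binaryValue_nonneg (hd : ∀ j, 0 ≤ d j) : 0 ≤ binaryValue d :=
  tsum_nonneg fun j => div_nonneg (hd j) (by positivity)

lemma binaryValue_le_one (hd : ∀ j, d j ∈ Set.Icc (0 : ℝ) 1) : binaryValue d ≤ 1 :=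
  hasSum_le (fun j => by rw [div_div, ← pow_succ']; gcongr; exact (hd j).2)
    (summable_div_two_pow hd).hasSum (hasSum_geometric_two' 1)

lemma div_two_pow_le_binaryValue (hd : ∀ j, d j ∈ Set.Icc (0 : ℝ) 1) (j : ℕ) :
    d j / 2 ^ (j + 1) ≤ binaryValue d :=
  (summable_div_two_pow hd).le_tsum j fun k _ => div_nonneg (hd k).1 (by positivity)

lemma binaryCost_add {c : ℕ → ℝ} (hd : ∀ j, d j ∈ Set.Icc (0 : ℝ) 1)
    (hc : ∀ j, c j ∈ Set.Icc (0 : ℝ) 1) :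
    binaryCost (d + c) = binaryCost d + binaryCost c := by
  rw [binaryCost, binaryCost, binaryCost, ← (summable_succ_mul_div_two_pow hd).tsum_add
    (summable_succ_mul_div_two_pow hc)]
  exact tsum_congr fun j => by simp only [Pi.add_apply]; ring

lemma binaryCost_le_nat_mul_binaryValue_add (hd : ∀ j, d j ∈ Set.Icc (0 : ℝ) 1) (L : ℕ) :
    binaryCost d ≤ L * binaryValue d + 2 / 2 ^ L := by
  -- Split each depth as `j + 1 = L + (j + 1 - L)`; the excess is nonpositive for `j < L`.
  set g : ℕ → ℝ := fun j => ((j : ℝ) + 1 - L) * (d j / 2 ^ (j + 1))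
  have hvalue := (summable_div_two_pow hd).mul_left (L : ℝ)
  have hg : Summable g :=
    ((summable_succ_mul_div_two_pow hd).sub hvalue).congr fun j => by simp only [g]; ring
  have hcost : binaryCost d = L * binaryValue d + ∑' j, g j := by
    rw [binaryCost, binaryValue, ← tsum_mul_left, ← hvalue.tsum_add hg]
    exact tsum_congr fun j => by simp only [g]; ring
  have head : ∑ j ∈ Finset.range L, g j ≤ 0 := Finset.sum_nonpos fun j hj => by
    have : (j : ℝ) + 1 ≤ L := by exact_mod_cast Finset.mem_range.1 hj
    exact mul_nonpos_of_nonpos_of_nonneg (by linarith) (div_nonneg (hd j).1 (by positivity))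
  have tail : ∑' m, g (m + L) ≤ 2 / 2 ^ L := by
    refine hasSum_le (fun m => ?_) ((summable_nat_add_iff L).2 hg).hasSum
      (hasSum_succ_div_two_pow.div_const (2 ^ L))
    calc g (m + L) = (m + 1) * (d (m + L) / 2 ^ (m + L + 1)) := by simp only [g]; push_cast; ring
      _ ≤ (m + 1) * (1 / 2 ^ (m + L + 1)) := by gcongr; exact (hd _).2
      _ = (m + 1) / 2 ^ (m + 1) / 2 ^ L := by ring
  rw [hcost, ← hg.sum_add_tsum_nat_add L]
  linarith

lemma binaryCost_le_mul_logb_add (hd : ∀ j, d j ∈ Set.Icc (0 : ℝ) 1) :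
    binaryCost d ≤ binaryValue d * logb 2 (1 / binaryValue d) + 2 * binaryValue d := by
  rcases (binaryValue_nonneg fun j => (hd j).1).eq_or_lt with hzero | hpos
  · have hd0 : ∀ j, d j = 0 := fun j => by
      have h := div_two_pow_le_binaryValue hd j
      rw [← hzero, div_le_iff₀ (by positivity), zero_mul] at h
      exact h.antisymm (hd j).1
    simp [binaryCost, hd0, ← hzero]
  · obtain ⟨L, hL⟩ := exists_nat_mul_add_two_div_two_pow_le hpos (binaryValue_le_one hd)
    exact (binaryCost_le_nat_mul_binaryValue_add hd L).trans hL

lemma mul_logb_le_binaryCost (hd : ∀ j, d j = 0 ∨ d j = 1) :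
    binaryValue d * logb 2 (1 / binaryValue d) ≤ binaryCost d := by
  have hd' : ∀ j, d j ∈ Set.Icc (0 : ℝ) 1 := fun j => mem_Icc_of_eq_zero_or_eq_one (hd j)
  set x := binaryValue d
  have hterm (j : ℕ) :
      d j / 2 ^ (j + 1) * logb 2 (1 / x) ≤ ((j : ℝ) + 1) * d j / 2 ^ (j + 1) := by
    rcases hd j with h | h
    · simp [h]
    have hx : 1 / 2 ^ (j + 1) ≤ x := h ▸ div_two_pow_le_binaryValue hd' j
    have hxpos : 0 < x := lt_of_lt_of_le (by positivity) hx
    have hθ : logb 2 (1 / x) ≤ j + 1 := by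
      rw [logb_le_iff_le_rpow one_lt_two (by positivity), one_div_le hxpos (by positivity)]
      exact_mod_cast hx
    rw [h, div_mul_eq_mul_div, one_mul, mul_one]
    gcongr
  calc x * logb 2 (1 / x) = ∑' j, d j / 2 ^ (j + 1) * logb 2 (1 / x) := tsum_mul_right.symm
    _ ≤ binaryCost d := ((summable_div_two_pow hd').mul_right _).tsum_le_tsum hterm
          (summable_succ_mul_div_two_pow hd')

end BinaryExpansion

section TwoExpansions

variable {a c : ℕ → ℝ}

lemma mul_logb_le_binaryCost_add (ha : ∀ j, a j = 0 ∨ a j = 1)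
    (hc : ∀ j, c j = 0 ∨ c j = 1) :
    (binaryValue a + binaryValue c) * logb 2 (1 / (binaryValue a + binaryValue c))
      ≤ binaryCost (a + c) := by
  have ha' : ∀ j, a j ∈ Set.Icc (0 : ℝ) 1 := fun j => mem_Icc_of_eq_zero_or_eq_one (ha j)
  have hc' : ∀ j, c j ∈ Set.Icc (0 : ℝ) 1 := fun j => mem_Icc_of_eq_zero_or_eq_one (hc j)
  rw [binaryCost_add ha' hc']
  refine le_trans ?_ (add_le_add (mul_logb_le_binaryCost ha) (mul_logb_le_binaryCost hc))
  simp only [mul_logb_one_div_eq, ← add_div]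
  exact div_le_div_of_nonneg_right
    (negMulLog_add_le (binaryValue_nonneg fun j => (ha' j).1)
      (binaryValue_nonneg fun j => (hc' j).1)) (log_nonneg one_le_two)

lemma binaryCost_add_le (ha : ∀ j, a j ∈ Set.Icc (0 : ℝ) 1)
    (hc : ∀ j, c j ∈ Set.Icc (0 : ℝ) 1) :
    binaryCost (a + c) ≤ (binaryValue a + binaryValue c) *
      logb 2 (1 / (binaryValue a + binaryValue c)) + 3 * (binaryValue a + binaryValue c) := by
  set α := binaryValue a
  set β := binaryValue c
  have hentropy_split :
      α * logb 2 (1 / α) + β * logb 2 (1 / β)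
        ≤ (α + β) * logb 2 (1 / (α + β)) + (α + β) := by
    have h := div_le_div_of_nonneg_right
      (negMulLog_add_negMulLog_le (binaryValue_nonneg fun j => (ha j).1)
        (binaryValue_nonneg fun j => (hc j).1))
      (log_nonneg one_le_two)
    rwa [add_div, add_div, mul_div_cancel_right₀ _ (log_pos one_lt_two).ne',
      ← mul_logb_one_div_eq, ← mul_logb_one_div_eq, ← mul_logb_one_div_eq] at h
  rw [binaryCost_add ha hc]
  linarith [binaryCost_le_mul_logb_add ha, binaryCost_le_mul_logb_add hc]

end TwoExpansions

lemma tsum_le_tsum_and_tsum_le_tsum_add_mul_tsum {ι : Type*} {f g p : ι → ℝ} {c : ℝ}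
    (hf : ∀ i, 0 ≤ f i) (hfg : ∀ i, f i ≤ g i) (hgf : ∀ i, g i ≤ f i + c * p i)
    (hp : Summable p) :
    ∑' i, f i ≤ ∑' i, g i ∧ ∑' i, g i ≤ ∑' i, f i + c * ∑' i, p i := by
  by_cases hfs : Summable f
  · have hfp : Summable fun i => f i + c * p i := hfs.add (hp.mul_left c)
    have hgs : Summable g := .of_nonneg_of_le (fun i => (hf i).trans (hfg i)) hgf hfp
    refine ⟨hfs.tsum_le_tsum hfg hgs, ?_⟩
    rw [← tsum_mul_left, ← hfs.tsum_add (hp.mul_left c)]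
    exact hgs.tsum_le_tsum hgf hfp
  · have hgs : ¬ Summable g := fun hgs => hfs (.of_nonneg_of_le hf hfg hgs)
    rw [tsum_eq_zero_of_not_summable hfs, tsum_eq_zero_of_not_summable hgs, ← tsum_mul_left,
      zero_add]
    exact ⟨le_rfl, tsum_nonneg fun i => by linarith [hfg i, hgf i]⟩

theorem han_hoshi_bounds_general
    (p α β : ℕ → ℝ)
    (hsplit : ∀ i, α i + β i = p i) (hpsum : HasSum p 1)
    (a c : ℕ → ℕ → ℝ)
    (ha : ∀ i j, a i j = 0 ∨ a i j = 1) (hc : ∀ i j, c i j = 0 ∨ c i j = 1)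
    (haexp : ∀ i, α i = ∑' j : ℕ, a i j / 2 ^ (j + 1))
    (hcexp : ∀ i, β i = ∑' j : ℕ, c i j / 2 ^ (j + 1)) :
    (∑' i : ℕ, p i * Real.logb 2 (1 / p i))
        ≤ (∑' i : ℕ, ∑' j : ℕ, ((j : ℝ) + 1) * (a i j + c i j) / 2 ^ (j + 1)) ∧
      (∑' i : ℕ, ∑' j : ℕ, ((j : ℝ) + 1) * (a i j + c i j) / 2 ^ (j + 1))
        ≤ (∑' i : ℕ, p i * Real.logb 2 (1 / p i)) + 3 := by
  have ha' i j : a i j ∈ Set.Icc (0 : ℝ) 1 := mem_Icc_of_eq_zero_or_eq_one (ha i j)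
  have hc' i j : c i j ∈ Set.Icc (0 : ℝ) 1 := mem_Icc_of_eq_zero_or_eq_one (hc i j)
  have hp : ∀ i, p i = binaryValue (a i) + binaryValue (c i) := fun i => by
    rw [← hsplit, haexp, hcexp, binaryValue, binaryValue]
  have hp0 : ∀ i, 0 ≤ p i := fun i => by
    rw [hp]; exact add_nonneg (binaryValue_nonneg fun j => (ha' i j).1)
      (binaryValue_nonneg fun j => (hc' i j).1)
  have hp1 : ∀ i, p i ≤ 1 := fun i => le_hasSum hpsum i fun j _ => hp0 j
  have hentropy : ∀ i, 0 ≤ p i * logb 2 (1 / p i) := fun i => by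
    rw [mul_logb_one_div_eq]
    exact div_nonneg (negMulLog_nonneg (hp0 i) (hp1 i)) (log_nonneg one_le_two)
  have h := tsum_le_tsum_and_tsum_le_tsum_add_mul_tsum (g := fun i => binaryCost (a i + c i))
    hentropy (fun i => by rw [hp i]; exact mul_logb_le_binaryCost_add (ha i) (hc i))
    (fun i => by rw [hp i]; exact binaryCost_add_le (ha' i) (hc' i)) hpsum.summable
  rwa [hpsum.tsum_eq, mul_one] at h

/-- Han–Hoshi bound: Let `(p_i)` be a probability vector, `α_i + β_i = p_i`
with `α_i, β_i ≥ 0`, and let `a i j` (resp. `c i j`) be the binary digits of `α_i`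
(resp. `β_i`).  Then `E(T) = Σ_i Σ_j j·((α_i)_j + (β_i)_j)·2^{−j}` satisfies
`H(p) ≤ E(T) ≤ H(p) + 3`. -/
theorem han_hoshi_bounds
    (p α β : ℕ → ℝ) (hα : ∀ i, 0 ≤ α i) (hβ : ∀ i, 0 ≤ β i)
    (hsplit : ∀ i, α i + β i = p i) (hpsum : HasSum p 1)
    (a c : ℕ → ℕ → ℝ)
    (ha : ∀ i j, a i j = 0 ∨ a i j = 1) (hc : ∀ i j, c i j = 0 ∨ c i j = 1)
    (haexp : ∀ i, α i = ∑' j : ℕ, a i j / 2 ^ (j + 1))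
    (hcexp : ∀ i, β i = ∑' j : ℕ, c i j / 2 ^ (j + 1)) :
    (∑' i : ℕ, p i * Real.logb 2 (1 / p i))
        ≤ (∑' i : ℕ, ∑' j : ℕ, ((j : ℝ) + 1) * (a i j + c i j) / 2 ^ (j + 1)) ∧
      (∑' i : ℕ, ∑' j : ℕ, ((j : ℝ) + 1) * (a i j + c i j) / 2 ^ (j + 1))
        ≤ (∑' i : ℕ, p i * Real.logb 2 (1 / p i)) + 3 :=
  han_hoshi_bounds_general p α β hsplit hpsum a c ha hc haexp hcexp
end

section
/- Let p ∈ [1,∞), d ≥ 1, ε > 0 and h > 0, and consider the cubic partition 𝒜*_h of ℝ^d. For any cell A of 𝒜*_h, the number N of cells B of 𝒜*_h (including A itself) with inf{‖x − y‖_p : x ∈ A, y ∈ B} < ε satisfies λ(B_ε)/h^d ≤ N ≤ λ(B_{ε + 2h·d^{1/p}})/h^d, where B_r denotes the closed ℓ_p-ball of radius r centered at the origin in ℝ^d and λ is Lebesgue measure. -/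
/-!
Fix a point `x₀` of the cell `A`. Each cell has `ℓ_p`-diameter at most `h d^{1/p}`, so by the
triangle inequality every neighbouring cell lies in the ball of radius `ε + 2 h d^{1/p}` about
`x₀`; the cells are disjoint of volume `h^d`, which gives finiteness and the upper bound.
Conversely every point of the open ball of radius `ε` about `x₀` lies in some cell, which is then
a neighbour, so that ball is covered by the neighbouring cells. The open and the closed ball have
the same volume since the ball is convex and the frontier of a convex set is Lebesgue-null.
-/

open MeasureTheory

/-- The `ℓ_p` norm of a vector of `ℝ^d` for finite `p ∈ [1,∞)`. -/
noncomputable def lpNormR {d : ℕ} (p : ℝ) (x : Fin d → ℝ) : ℝ :=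
  (∑ i, |x i| ^ p) ^ (1 / p)

/-- The cell of the cubic partition `𝒜*_h` of `ℝ^d` indexed by `i ∈ ℤ^d`,
namely `∏_j [i_j h, (i_j + 1) h)`. -/
def cubicCell {d : ℕ} (h : ℝ) (i : Fin d → ℤ) : Set (Fin d → ℝ) :=
  {x | ∀ j, x j ∈ Set.Ico ((i j : ℝ) * h) (((i j : ℝ) + 1) * h)}

open Set Filter Topology
open scoped ENNReal

section Counting

variable {ι α : Type*} [MeasurableSpace α] {μ : Measure α} {f : ι → Set α} {t : Set α}
  {c : ℝ≥0∞}

theorem Finset.card_mul_le_measure_of_pairwiseDisjoint {F : Finset ι}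
    (hdisj : (F : Set ι).PairwiseDisjoint f) (hf : ∀ i ∈ F, MeasurableSet (f i))
    (hc : ∀ i ∈ F, c ≤ μ (f i)) (ht : ∀ i ∈ F, f i ⊆ t) : F.card * c ≤ μ t :=
  calc F.card * c = ∑ _i ∈ F, c := by rw [Finset.sum_const, nsmul_eq_mul]
    _ ≤ ∑ i ∈ F, μ (f i) := Finset.sum_le_sum hc
    _ = μ (⋃ i ∈ F, f i) := (measure_biUnion_finset hdisj hf).symm
    _ ≤ μ t := measure_mono (iUnion₂_subset ht)

theorem Set.finite_and_ncard_mul_le_measure_of_pairwiseDisjoint {s : Set ι}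
    (hdisj : s.PairwiseDisjoint f) (hf : ∀ i ∈ s, MeasurableSet (f i))
    (hc : ∀ i ∈ s, c ≤ μ (f i)) (hc0 : c ≠ 0) (ht : ∀ i ∈ s, f i ⊆ t)
    (hμt : μ t ≠ ∞) :
    s.Finite ∧ s.ncard * c ≤ μ t := by
  have hcard : ∀ F : Finset ι, ↑F ⊆ s → F.card * c ≤ μ t := fun F hF =>
    Finset.card_mul_le_measure_of_pairwiseDisjoint (hdisj.subset hF)
      (fun i hi => hf i (hF hi)) (fun i hi => hc i (hF hi)) (fun i hi => ht i (hF hi))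
  have hs : s.Finite := by
    by_contra hinf
    obtain ⟨n, hn⟩ := ENNReal.exists_nat_mul_gt hc0 hμt
    obtain ⟨F, hFs, rfl⟩ := Set.Infinite.exists_subset_card_eq hinf n
    exact (hcard F hFs).not_gt hn
  refine ⟨hs, ?_⟩
  rw [ncard_eq_toFinset_card s hs]
  exact hcard _ hs.coe_toFinset.subset

theorem Set.Finite.measure_le_ncard_mul {s : Set ι} (hs : s.Finite) (ht : t ⊆ ⋃ i ∈ s, f i)
    (hc : ∀ i ∈ s, μ (f i) ≤ c) : μ t ≤ s.ncard * c :=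
  calc μ t ≤ μ (⋃ i ∈ hs.toFinset, f i) := measure_mono (by simpa using ht)
    _ ≤ ∑ i ∈ hs.toFinset, μ (f i) := measure_biUnion_finset_le _ _
    _ ≤ ∑ _i ∈ hs.toFinset, c := Finset.sum_le_sum fun i hi => hc i (hs.mem_toFinset.1 hi)
    _ = s.ncard * c := by rw [Finset.sum_const, nsmul_eq_mul, ncard_eq_toFinset_card s hs]

end Counting

theorem MeasureTheory.measure_preimage_sub_right {G : Type*} [AddGroup G] [MeasurableSpace G]
    [MeasurableAdd G] (μ : Measure G) [μ.IsAddRightInvariant] (g : G) (A : Set G) :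
    μ ((· - g) ⁻¹' A) = μ A := by
  simpa only [sub_eq_add_neg] using measure_preimage_add_right μ (-g) A

theorem Convex.addHaar_closure {E : Type*} [NormedAddCommGroup E] [NormedSpace ℝ E]
    [MeasurableSpace E] [BorelSpace E] [FiniteDimensional ℝ E] (μ : Measure E)
    [μ.IsAddHaarMeasure] {s : Set E} (hs : Convex ℝ s) : μ (closure s) = μ s := by
  refine le_antisymm ?_ (measure_mono subset_closure)
  calc μ (closure s) ≤ μ s + μ (frontier s) := by
        rw [closure_eq_self_union_frontier]; exact measure_union_le _ _
    _ = μ s := by rw [hs.addHaar_frontier μ, add_zero]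

section LpNorm

variable {d : ℕ} {p : ℝ}

theorem lpNormR_nonneg (x : Fin d → ℝ) : 0 ≤ lpNormR p x :=
  Real.rpow_nonneg (Finset.sum_nonneg fun _ _ => Real.rpow_nonneg (abs_nonneg _) _) _

theorem lpNormR_sub_comm (x y : Fin d → ℝ) : lpNormR p (x - y) = lpNormR p (y - x) := by
  simp only [lpNormR, Pi.sub_apply, abs_sub_comm]

theorem abs_le_lpNormR (hp : 0 < p) (x : Fin d → ℝ) (j : Fin d) : |x j| ≤ lpNormR p x :=
  calc |x j| = (|x j| ^ p) ^ (1 / p) := by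
        rw [← Real.rpow_mul (abs_nonneg _), mul_one_div_cancel hp.ne', Real.rpow_one]
    _ ≤ lpNormR p x := Real.rpow_le_rpow (by positivity)
        (Finset.single_le_sum (fun i _ => Real.rpow_nonneg (abs_nonneg (x i)) p)
          (Finset.mem_univ j)) (by positivity)

theorem lpNormR_smul (hp : 0 < p) (t : ℝ) (x : Fin d → ℝ) :
    lpNormR p (t • x) = |t| * lpNormR p x := by
  simp only [lpNormR, Pi.smul_apply, smul_eq_mul, abs_mul,
    Real.mul_rpow (abs_nonneg _) (abs_nonneg _), ← Finset.mul_sum]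
  rw [Real.mul_rpow (by positivity) (Finset.sum_nonneg fun _ _ => by positivity),
    ← Real.rpow_mul (abs_nonneg t), mul_one_div_cancel hp.ne', Real.rpow_one]

theorem lpNormR_add_le (hp : 1 ≤ p) (x y : Fin d → ℝ) :
    lpNormR p (x + y) ≤ lpNormR p x + lpNormR p y := by
  simpa [lpNormR] using Real.Lp_add_le Finset.univ x y hp

theorem lpNormR_le_of_forall_abs_le (hp : 0 < p) {c : ℝ} (hc : 0 ≤ c) {x : Fin d → ℝ}
    (hx : ∀ j, |x j| ≤ c) : lpNormR p x ≤ c * (d : ℝ) ^ (1 / p) :=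
  calc lpNormR p x ≤ (∑ _j : Fin d, c ^ p) ^ (1 / p) :=
        Real.rpow_le_rpow (Finset.sum_nonneg fun _ _ => by positivity)
          (Finset.sum_le_sum fun j _ => Real.rpow_le_rpow (abs_nonneg _) (hx j) hp.le)
          (by positivity)
    _ = c * (d : ℝ) ^ (1 / p) := by
        rw [Finset.sum_const, Finset.card_univ, Fintype.card_fin, nsmul_eq_mul,
          Real.mul_rpow (Nat.cast_nonneg d) (by positivity), ← Real.rpow_mul hc,
          mul_one_div_cancel hp.ne', Real.rpow_one, mul_comm]

theorem convexOn_lpNormR (hp : 1 ≤ p) : ConvexOn ℝ univ (lpNormR (d := d) p) := by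
  refine ⟨convex_univ, fun x _ y _ a b ha hb _ => ?_⟩
  have hp0 : 0 < p := zero_lt_one.trans_le hp
  calc lpNormR p (a • x + b • y) ≤ lpNormR p (a • x) + lpNormR p (b • y) :=
        lpNormR_add_le hp _ _
    _ = a • lpNormR p x + b • lpNormR p y := by
        rw [lpNormR_smul hp0, lpNormR_smul hp0, abs_of_nonneg ha, abs_of_nonneg hb,
          smul_eq_mul, smul_eq_mul]

theorem setOf_lpNormR_le_subset_closure (hp : 0 < p) {r : ℝ} (hr : 0 < r) :
    {x : Fin d → ℝ | lpNormR p x ≤ r} ⊆ closure {x | lpNormR p x < r} := by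
  intro x hx
  have htend : Tendsto (fun t : ℝ => t • x) (𝓝[<] 1) (𝓝 x) :=
    ((by fun_prop : Continuous fun t : ℝ => t • x).tendsto' 1 x (one_smul ℝ x)).mono_left
      nhdsWithin_le_nhds
  refine mem_closure_of_tendsto htend (mem_of_superset (Ioo_mem_nhdsLT zero_lt_one) ?_)
  rintro t ⟨ht0, ht1⟩
  calc lpNormR p (t • x) = t * lpNormR p x := by rw [lpNormR_smul hp, abs_of_pos ht0]
    _ ≤ t * r := mul_le_mul_of_nonneg_left hx ht0.le
    _ < r := mul_lt_of_lt_one_left hr ht1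

theorem volume_setOf_lpNormR_le (hp : 1 ≤ p) {r : ℝ} (hr : 0 < r) :
    volume {x : Fin d → ℝ | lpNormR p x ≤ r}
      = volume {x : Fin d → ℝ | lpNormR p x < r} := by
  have hconv : Convex ℝ {x : Fin d → ℝ | lpNormR p x < r} := by
    simpa only [mem_univ, true_and] using (convexOn_lpNormR hp).convex_lt r
  refine le_antisymm ?_ (measure_mono (ofPred_subset_ofPred.2 fun _ => le_of_lt))
  calc volume {x : Fin d → ℝ | lpNormR p x ≤ r}
      ≤ volume (closure {x : Fin d → ℝ | lpNormR p x < r}) :=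
        measure_mono (setOf_lpNormR_le_subset_closure (zero_lt_one.trans_le hp) hr)
    _ = volume {x : Fin d → ℝ | lpNormR p x < r} := hconv.addHaar_closure volume

theorem volume_setOf_lpNormR_le_ne_top (hp : 0 < p) (r : ℝ) :
    volume {x : Fin d → ℝ | lpNormR p x ≤ r} ≠ ∞ := by
  refine (Bornology.IsBounded.measure_lt_top ?_).ne
  refine (Metric.isBounded_closedBall (x := 0) (r := r)).subset fun x hx => ?_
  refine mem_closedBall_zero_iff.2 ((pi_norm_le_iff_of_nonneg ((lpNormR_nonneg x).trans hx)).2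
    fun j => ?_)
  exact (Real.norm_eq_abs _ ▸ abs_le_lpNormR hp x j).trans hx

end LpNorm

section Cells

variable {d : ℕ} {h : ℝ}

theorem cubicCell_eq_pi (h : ℝ) (i : Fin d → ℤ) :
    cubicCell h i = univ.pi fun j => Ico ((i j : ℝ) * h) (((i j : ℝ) + 1) * h) := by
  ext x; simp [cubicCell]

theorem measurableSet_cubicCell (h : ℝ) (i : Fin d → ℤ) : MeasurableSet (cubicCell h i) := by
  rw [cubicCell_eq_pi]; exact MeasurableSet.univ_pi fun _ => measurableSet_Ico

theorem volume_cubicCell (h : ℝ) (i : Fin d → ℤ) :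
    volume (cubicCell h i) = ENNReal.ofReal h ^ d := by
  simp [cubicCell_eq_pi, Real.volume_pi_Ico, add_mul]

theorem mem_cubicCell_iff (hh : 0 < h) {i : Fin d → ℤ} {x : Fin d → ℝ} :
    x ∈ cubicCell h i ↔ i = fun j => ⌊x j / h⌋ := by
  simp only [cubicCell, mem_ofPred_eq, mem_Ico, funext_iff, eq_comm (a := i _),
    Int.floor_eq_iff, le_div_iff₀ hh, div_lt_iff₀ hh]

theorem nonempty_cubicCell (hh : 0 < h) (i : Fin d → ℤ) : (cubicCell h i).Nonempty :=
  ⟨fun j => (i j : ℝ) * h, (mem_cubicCell_iff hh).2 (by simp [hh.ne'])⟩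

theorem pairwiseDisjoint_cubicCell (hh : 0 < h) (s : Set (Fin d → ℤ)) :
    s.PairwiseDisjoint (cubicCell h) :=
  fun _ _ _ _ hne => disjoint_left.2 fun _ hx hx' =>
    hne (((mem_cubicCell_iff hh).1 hx).trans ((mem_cubicCell_iff hh).1 hx').symm)

theorem lpNormR_sub_le_of_mem_cubicCell {p : ℝ} (hp : 0 < p) (hh : 0 ≤ h) {i : Fin d → ℤ}
    {x y : Fin d → ℝ} (hx : x ∈ cubicCell h i) (hy : y ∈ cubicCell h i) :
    lpNormR p (x - y) ≤ h * (d : ℝ) ^ (1 / p) := by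
  refine lpNormR_le_of_forall_abs_le hp hh fun j => ?_
  obtain ⟨hx₁, hx₂⟩ := hx j
  obtain ⟨hy₁, hy₂⟩ := hy j
  rw [Pi.sub_apply, abs_sub_le_iff]
  constructor <;> linarith

end Cells

section Neighbours

variable {d : ℕ} {p ε h : ℝ} {i₀ : Fin d → ℤ} {x₀ : Fin d → ℝ}

def cubicNeighbours (p ε h : ℝ) (i₀ : Fin d → ℤ) : Set (Fin d → ℤ) :=
  {i | ∃ x ∈ cubicCell h i₀, ∃ y ∈ cubicCell h i, lpNormR p (x - y) < ε}

theorem cubicCell_subset_of_mem_cubicNeighbours (hp : 1 ≤ p) (hh : 0 ≤ h)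
    (hx₀ : x₀ ∈ cubicCell h i₀) {i : Fin d → ℤ}
    (hi : i ∈ cubicNeighbours p ε h i₀) :
    cubicCell h i ⊆ {z | lpNormR p (z - x₀) ≤ ε + 2 * h * (d : ℝ) ^ (1 / p)} := by
  obtain ⟨x, hx, y, hy, hxy⟩ := hi
  intro z hz
  have hp0 : 0 < p := zero_lt_one.trans_le hp
  have hzy := lpNormR_sub_le_of_mem_cubicCell hp0 hh hz hy
  have hxx₀ := lpNormR_sub_le_of_mem_cubicCell hp0 hh hx hx₀
  rw [lpNormR_sub_comm] at hxy
  calc lpNormR p (z - x₀) = lpNormR p ((z - y) + ((y - x) + (x - x₀))) := by abel_nf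
    _ ≤ lpNormR p (z - y) + (lpNormR p (y - x) + lpNormR p (x - x₀)) :=
        (lpNormR_add_le hp _ _).trans (add_le_add le_rfl (lpNormR_add_le hp _ _))
    _ ≤ ε + 2 * h * (d : ℝ) ^ (1 / p) := by linarith

theorem setOf_lpNormR_sub_lt_subset_biUnion_cubicNeighbours (hh : 0 < h)
    (hx₀ : x₀ ∈ cubicCell h i₀) :
    {z | lpNormR p (z - x₀) < ε} ⊆ ⋃ i ∈ cubicNeighbours p ε h i₀, cubicCell h i := by
  intro z hz
  have hzcell : z ∈ cubicCell h fun j => ⌊z j / h⌋ := (mem_cubicCell_iff hh).2 rfl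
  refine mem_biUnion ⟨x₀, hx₀, z, hzcell, ?_⟩ hzcell
  rwa [lpNormR_sub_comm]

theorem cubicNeighbours_finite_and_ncard_mul_le (hp : 1 ≤ p) (hh : 0 < h)
    (hx₀ : x₀ ∈ cubicCell h i₀) :
    (cubicNeighbours p ε h i₀).Finite ∧
      (cubicNeighbours p ε h i₀).ncard * ENNReal.ofReal h ^ d
        ≤ volume {x : Fin d → ℝ | lpNormR p x ≤ ε + 2 * h * (d : ℝ) ^ (1 / p)} := by
  rw [← measure_preimage_sub_right volume x₀]
  exact Set.finite_and_ncard_mul_le_measure_of_pairwiseDisjoint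
    (pairwiseDisjoint_cubicCell hh _) (fun i _ => measurableSet_cubicCell h i)
    (fun i _ => (volume_cubicCell h i).ge) (pow_ne_zero _ (ENNReal.ofReal_pos.2 hh).ne')
    (fun _ hi => cubicCell_subset_of_mem_cubicNeighbours hp hh.le hx₀ hi)
    ((measure_preimage_sub_right volume x₀ _).trans_ne
      (volume_setOf_lpNormR_le_ne_top (zero_lt_one.trans_le hp) _))

theorem volume_le_ncard_cubicNeighbours_mul (hp : 1 ≤ p) (hε : 0 < ε) (hh : 0 < h)
    (hx₀ : x₀ ∈ cubicCell h i₀) (hfin : (cubicNeighbours p ε h i₀).Finite) :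
    volume {x : Fin d → ℝ | lpNormR p x ≤ ε}
      ≤ (cubicNeighbours p ε h i₀).ncard * ENNReal.ofReal h ^ d := by
  rw [volume_setOf_lpNormR_le hp hε, ← measure_preimage_sub_right volume x₀]
  exact hfin.measure_le_ncard_mul
    (setOf_lpNormR_sub_lt_subset_biUnion_cubicNeighbours hh hx₀)
    fun i _ => (volume_cubicCell h i).le

end Neighbours

theorem cubic_partition_neighbour_count_general
    {d : ℕ} (p : ℝ) (hp : 1 ≤ p) (ε h : ℝ) (hε : 0 < ε) (hh : 0 < h)
    (i₀ : Fin d → ℤ) :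
    (({i : Fin d → ℤ | ∃ x ∈ cubicCell h i₀, ∃ y ∈ cubicCell h i,
        lpNormR p (x - y) < ε}).Finite) ∧
    (volume {x : Fin d → ℝ | lpNormR p x ≤ ε}).toReal / h ^ d
        ≤ ({i : Fin d → ℤ | ∃ x ∈ cubicCell h i₀, ∃ y ∈ cubicCell h i,
            lpNormR p (x - y) < ε}).ncard ∧
    (({i : Fin d → ℤ | ∃ x ∈ cubicCell h i₀, ∃ y ∈ cubicCell h i,
        lpNormR p (x - y) < ε}).ncard : ℝ)
      ≤ (volume {x : Fin d → ℝ | lpNormR p x ≤ ε + 2 * h * (d : ℝ) ^ (1 / p)}).toReal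
          / h ^ d := by
  change (cubicNeighbours p ε h i₀).Finite ∧
    _ ≤ ((cubicNeighbours p ε h i₀).ncard : ℝ) ∧
    ((cubicNeighbours p ε h i₀).ncard : ℝ) ≤ _
  set N := (cubicNeighbours p ε h i₀).ncard
  obtain ⟨x₀, hx₀⟩ := nonempty_cubicCell hh i₀
  obtain ⟨hfin, hupper⟩ := cubicNeighbours_finite_and_ncard_mul_le (ε := ε) hp hh hx₀
  have hlower := volume_le_ncard_cubicNeighbours_mul hp hε hh hx₀ hfin
  have hcast : (N : ℝ≥0∞) * ENNReal.ofReal h ^ d = ENNReal.ofReal (N * h ^ d) := by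
    rw [ENNReal.ofReal_mul (Nat.cast_nonneg _), ENNReal.ofReal_natCast, ENNReal.ofReal_pow hh.le]
  rw [hcast] at hlower hupper
  refine ⟨hfin, ?_, ?_⟩
  · rw [div_le_iff₀ (pow_pos hh d)]
    exact ENNReal.toReal_le_of_le_ofReal (by positivity) hlower
  · rw [le_div_iff₀ (pow_pos hh d)]
    exact (ENNReal.ofReal_le_iff_le_toReal
      (volume_setOf_lpNormR_le_ne_top (zero_lt_one.trans_le hp) _)).1 hupper

/-- for `p ∈ [1,∞)`, `d ≥ 1`, `ε, h > 0` and any cell `A = cubicCell h i₀`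
of the cubic partition, the number `N` of cells `B` (including `A`) with
`inf{‖x−y‖_p : x ∈ A, y ∈ B} < ε` (equivalently: some pair at distance `< ε`) satisfies
`λ(B_ε)/h^d ≤ N ≤ λ(B_{ε+2h·d^{1/p}})/h^d`, where `B_r` is the closed `ℓ_p`-ball of
radius `r` and `λ` is Lebesgue measure. -/
theorem cubic_partition_neighbour_count
    {d : ℕ} (hd : 1 ≤ d) (p : ℝ) (hp : 1 ≤ p) (ε h : ℝ) (hε : 0 < ε) (hh : 0 < h)
    (i₀ : Fin d → ℤ) :
    (({i : Fin d → ℤ | ∃ x ∈ cubicCell h i₀, ∃ y ∈ cubicCell h i,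
        lpNormR p (x - y) < ε}).Finite) ∧
    (volume {x : Fin d → ℝ | lpNormR p x ≤ ε}).toReal / h ^ d
        ≤ ({i : Fin d → ℤ | ∃ x ∈ cubicCell h i₀, ∃ y ∈ cubicCell h i,
            lpNormR p (x - y) < ε}).ncard ∧
    (({i : Fin d → ℤ | ∃ x ∈ cubicCell h i₀, ∃ y ∈ cubicCell h i,
        lpNormR p (x - y) < ε}).ncard : ℝ)
      ≤ (volume {x : Fin d → ℝ | lpNormR p x ≤ ε + 2 * h * (d : ℝ) ^ (1 / p)}).toReal
          / h ^ d :=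
  cubic_partition_neighbour_count_general p hp ε h hε hh i₀
end

section
/- (Randomness extraction.) Let (p_i)_{i≥1} be a probability vector with binary digits b_{i,j} ∈ {0,1}, p_i = Σ_{j=1}^∞ b_{i,j} 2^{−j}, and set p_{i,j} = b_{i,j} 2^{−j}. Assume ℰ := Σ_i Σ_j p_{i,j}·log₂(p_i / p_{i,j}) < ∞ (sum over pairs with b_{i,j} = 1). Let (X_ℓ, Y_ℓ)_{ℓ≥1} be i.i.d. pairs of positive-integer random variables with joint law P(X = i, Y = j) = p_{i,j}. For i with p_i > 0 define F_i(0) = 0 and F_i(j) = (1/p_i) Σ_{k=1}^j p_{i,k}, and define recursively U_0⁻ = 0, U_0⁺ = 1, U_ℓ⁻ = U_{ℓ−1}⁻ + (U_{ℓ−1}⁺ − U_{ℓ−1}⁻)·F_{X_ℓ}(Y_ℓ − 1), U_ℓ⁺ = U_{ℓ−1}⁻ + (U_{ℓ−1}⁺ − U_{ℓ−1}⁻)·F_{X_ℓ}(Y_ℓ). Let R_n = max{t ≥ 0 : ⌊2^t U_n⁻⌋ = ⌊2^t U_n⁺⌋}. Then R_n / n → ℰ in probability as n → ∞. -/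
/-!
After `n` steps the interval `(U_n⁻, U_n⁺]` has length `∏_{ℓ<n} p_{X_ℓ,Y_ℓ} / p_{X_ℓ}`, so its
information `-log₂ (U_n⁺ - U_n⁻)` is a sum of `n` i.i.d. terms with mean `ℰ`, and equals
`n ℰ + o(n)` in probability by the strong law of large numbers.

Two numbers sharing `t` leading binary digits are less than `2^{-t}` apart, so `R_n` never exceeds
the information. Conversely, `R_n < t` puts a grid point `k / 2^t` into the interval. For fixed
`X_1, …, X_n` the intervals belonging to different `Y`-sequences are disjoint, so a grid point lies
in at most one of them; hence the probability that the interval is shorter than `2^{-t-c}` and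
still contains one of the `2^t` grid points is at most `2^{-c}`. With `t ≈ n (ℰ - δ)` and
`c ≈ n δ / 2` this rules out `R_n ≤ n (ℰ - δ)` with high probability.
-/

open MeasureTheory ProbabilityTheory Finset Filter Topology
open scoped ENNReal

noncomputable section

namespace RandomnessExtraction

/-- The number of leading binary digits shared by `a` and `c`; as an `sSup` in `ℕ` it is `0` when
the set is empty or unbounded (e.g. for `a = c`). -/
def commonBits (a c : ℝ) : ℕ := sSup {t : ℕ | ⌊(2 : ℝ) ^ t * a⌋ = ⌊(2 : ℝ) ^ t * c⌋}

lemma lt_neg_logb_of_floor_eq {a c : ℝ} (hac : a < c) {t : ℕ}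
    (h : ⌊(2 : ℝ) ^ t * a⌋ = ⌊(2 : ℝ) ^ t * c⌋) : (t : ℝ) < -Real.logb 2 (c - a) := by
  have hlt : (2 : ℝ) ^ t * (c - a) < 1 := by
    have := Int.lt_floor_add_one ((2 : ℝ) ^ t * c)
    have := Int.floor_le ((2 : ℝ) ^ t * a)
    rw [← h] at *
    linarith
  rw [← Real.logb_inv, Real.lt_logb_iff_rpow_lt one_lt_two (by simpa using hac), Real.rpow_natCast]
  rwa [← mul_one (c - a)⁻¹, lt_inv_mul_iff₀ (sub_pos.2 hac), mul_comm]

lemma bddAbove_setOf_floor_eq {a c : ℝ} (hac : a < c) :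
    BddAbove {t : ℕ | ⌊(2 : ℝ) ^ t * a⌋ = ⌊(2 : ℝ) ^ t * c⌋} :=
  ⟨⌈-Real.logb 2 (c - a)⌉₊, fun _ ht =>
    Nat.cast_le.1 ((lt_neg_logb_of_floor_eq hac ht).le.trans (Nat.le_ceil _))⟩

lemma le_commonBits {a c : ℝ} (hac : a < c) {t : ℕ}
    (h : ⌊(2 : ℝ) ^ t * a⌋ = ⌊(2 : ℝ) ^ t * c⌋) : t ≤ commonBits a c :=
  le_csSup (bddAbove_setOf_floor_eq hac) h

lemma commonBits_le_neg_logb {a c : ℝ} (hac : a < c) (hca : c - a ≤ 1) :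
    (commonBits a c : ℝ) ≤ -Real.logb 2 (c - a) := by
  rcases Set.eq_empty_or_nonempty {t : ℕ | ⌊(2 : ℝ) ^ t * a⌋ = ⌊(2 : ℝ) ^ t * c⌋} with h | h
  · rw [commonBits, h, csSup_empty, Nat.bot_eq_zero, Nat.cast_zero, neg_nonneg]
    exact Real.logb_nonpos one_lt_two (sub_pos.2 hac).le hca
  · exact (lt_neg_logb_of_floor_eq hac (Nat.sSup_mem h (bddAbove_setOf_floor_eq hac))).le

/-- The witness is `k = ⌊2^t c⌋`. -/
lemma exists_dyadic_mem_Ioc_of_floor_ne {a c : ℝ} (ha : 0 ≤ a) (hac : a ≤ c) (hc : c ≤ 1)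
    {t : ℕ} (h : ⌊(2 : ℝ) ^ t * a⌋ ≠ ⌊(2 : ℝ) ^ t * c⌋) :
    ∃ k ∈ Ioc (0 : ℕ) (2 ^ t), (k : ℝ) / 2 ^ t ∈ Set.Ioc a c := by
  have h2t : (0 : ℝ) < 2 ^ t := by positivity
  have hfloor : ⌊(2 : ℝ) ^ t * a⌋ < ⌊(2 : ℝ) ^ t * c⌋ :=
    (Int.floor_mono (by gcongr)).lt_of_ne h
  have hc0 : 0 ≤ (2 : ℝ) ^ t * c := by have := ha.trans hac; positivity
  have hlo : (2 : ℝ) ^ t * a < ⌊(2 : ℝ) ^ t * c⌋₊ := by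
    rw [natCast_floor_eq_intCast_floor hc0]; exact Int.floor_lt.1 hfloor
  have hhi : (⌊(2 : ℝ) ^ t * c⌋₊ : ℝ) ≤ 2 ^ t * c := Nat.floor_le hc0
  refine ⟨⌊(2 : ℝ) ^ t * c⌋₊, mem_Ioc.2 ⟨?_, ?_⟩, ?_, ?_⟩
  · exact_mod_cast (by positivity : (0 : ℝ) ≤ 2 ^ t * a).trans_lt hlo
  · exact_mod_cast hhi.trans (mul_le_of_le_one_right h2t.le hc)
  · rwa [lt_div_iff₀' h2t]
  · rwa [div_le_iff₀' h2t]

lemma neg_logb_lt_of_pow_lt {x : ℝ} {m : ℕ} (h : (1 / 2 : ℝ) ^ m < x) : -Real.logb 2 x < m := by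
  have := Real.logb_lt_logb one_lt_two (by positivity) h
  rw [Real.logb_pow, one_div, Real.logb_inv, Real.logb_self_eq_one one_lt_two] at this
  linarith

/-- Here `8 ≤ n δ` absorbs the rounding errors of the two ceilings. -/
lemma abs_neg_logb_sub_le_or_floor_ne {a c E δ : ℝ} {n : ℕ} (ha : 0 ≤ a) (hac : a < c)
    (hc : c ≤ 1) (hn : 8 ≤ n * δ) (h : δ < |commonBits a c / n - E|) :
    δ / 4 ≤ |-Real.logb 2 (c - a) / n - E| ∨
      (⌊(2 : ℝ) ^ ⌈n * (E - δ)⌉₊ * a⌋ ≠ ⌊(2 : ℝ) ^ ⌈n * (E - δ)⌉₊ * c⌋ ∧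
        c - a ≤ (1 / 2) ^ (⌈n * (E - δ)⌉₊ + ⌈n * (δ / 2)⌉₊)) := by
  have hδ : 0 < δ := by by_contra! h; nlinarith [(n.cast_nonneg : (0 : ℝ) ≤ n)]
  have hn0 : (0 : ℝ) < n := by by_contra! h; nlinarith
  have hRI := commonBits_le_neg_logb hac (by linarith)
  rcases lt_abs.1 h with hup | hlow
  · left
    have : (commonBits a c : ℝ) / n ≤ -Real.logb 2 (c - a) / n := by gcongr
    exact le_abs.2 (Or.inl (by linarith))
  · have hR : (commonBits a c : ℝ) < n * (E - δ) := by
      rw [← div_lt_iff₀' hn0]; linarith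
    have hEδ : 0 ≤ n * (E - δ) := (Nat.cast_nonneg _).trans hR.le
    have hfloor : ⌊(2 : ℝ) ^ ⌈n * (E - δ)⌉₊ * a⌋ ≠ ⌊(2 : ℝ) ^ ⌈n * (E - δ)⌉₊ * c⌋ := fun heq =>
      (le_commonBits hac heq).not_gt (by exact_mod_cast hR.trans_le (Nat.le_ceil _))
    by_cases hsmall : c - a ≤ (1 / 2) ^ (⌈n * (E - δ)⌉₊ + ⌈n * (δ / 2)⌉₊)
    · exact Or.inr ⟨hfloor, hsmall⟩
    · left
      have hI := neg_logb_lt_of_pow_lt (not_le.1 hsmall)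
      have ht := Nat.ceil_lt_add_one hEδ
      have hk := Nat.ceil_lt_add_one (by positivity : 0 ≤ (n : ℝ) * (δ / 2))
      push_cast at hI
      have : -Real.logb 2 (c - a) / n < E - δ / 4 := by
        rw [div_lt_iff₀ hn0]; nlinarith
      exact le_abs.2 (Or.inr (by linarith))

variable {p : ℕ → ℝ} {q : ℕ → ℕ → ℝ}

lemma nonneg_of_hasSum (hq : ∀ i j, 0 ≤ q i j) (hp : ∀ i, HasSum (q i) (p i)) (i : ℕ) :
    0 ≤ p i :=
  (hp i).nonneg (hq i)

lemma le_of_hasSum (hq : ∀ i j, 0 ≤ q i j) (hp : ∀ i, HasSum (q i) (p i)) (i j : ℕ) :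
    q i j ≤ p i :=
  le_hasSum (hp i) j fun k _ => hq i k

/- `q i j` stands for `p_{i,j}`, with the symbol `j` counted from `0`; `cdf p q i` is `F_i`, and
`width p q (i, j) = F_i(j+1) - F_i(j)` (see `cdf_succ`). -/
variable (p q) in
def cdf (i n : ℕ) : ℝ := 1 / p i * ∑ k ∈ range n, q i k

variable (p q) in
def width (a : ℕ × ℕ) : ℝ := q a.1 a.2 / p a.1

lemma cdf_succ (i j : ℕ) : cdf p q i (j + 1) = cdf p q i j + width p q (i, j) := by
  simp only [cdf, width, sum_range_succ]
  ring

lemma cdf_nonneg (hq : ∀ i j, 0 ≤ q i j) (hp : ∀ i, HasSum (q i) (p i)) (i n : ℕ) :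
    0 ≤ cdf p q i n :=
  mul_nonneg (one_div_nonneg.2 (nonneg_of_hasSum hq hp i)) (sum_nonneg fun k _ => hq i k)

lemma width_nonneg (hq : ∀ i j, 0 ≤ q i j) (hp : ∀ i, HasSum (q i) (p i)) (a : ℕ × ℕ) :
    0 ≤ width p q a :=
  div_nonneg (hq _ _) (nonneg_of_hasSum hq hp _)

lemma cdf_mono (hq : ∀ i j, 0 ≤ q i j) (hp : ∀ i, HasSum (q i) (p i)) (i : ℕ) :
    Monotone (cdf p q i) :=
  monotone_nat_of_le_succ fun j => by
    rw [cdf_succ]; exact le_add_of_nonneg_right (width_nonneg hq hp _)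

lemma cdf_le_one (hq : ∀ i j, 0 ≤ q i j) (hp : ∀ i, HasSum (q i) (p i)) (i n : ℕ) :
    cdf p q i n ≤ 1 := by
  rcases (nonneg_of_hasSum hq hp i).eq_or_lt with h | h
  · simp [cdf, ← h]
  · rw [cdf, one_div_mul_eq_div, div_le_one h]
    exact sum_le_hasSum _ (fun k _ => hq i k) (hp i)

lemma mul_width (hq : ∀ i j, 0 ≤ q i j) (hp : ∀ i, HasSum (q i) (p i)) (a : ℕ × ℕ) :
    p a.1 * width p q a = q a.1 a.2 := by
  rcases (nonneg_of_hasSum hq hp a.1).eq_or_lt with h | h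
  · have := le_of_hasSum hq hp a.1 a.2
    rw [← h] at this ⊢
    simpa using (le_antisymm this (hq _ _)).symm
  · exact mul_div_cancel₀ _ h.ne'

lemma logb_div_nonneg (hq : ∀ i j, 0 ≤ q i j) (hp : ∀ i, HasSum (q i) (p i)) (i j : ℕ) :
    0 ≤ Real.logb 2 (p i / q i j) := by
  rcases (hq i j).eq_or_lt with h | h
  · simp [← h]
  · exact Real.logb_nonneg one_lt_two ((one_le_div h).2 (le_of_hasSum hq hp i j))

lemma width_pos (hq : ∀ i j, 0 ≤ q i j) (hp : ∀ i, HasSum (q i) (p i)) {a : ℕ × ℕ}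
    (ha : 0 < q a.1 a.2) : 0 < width p q a :=
  div_pos ha (ha.trans_le (le_of_hasSum hq hp a.1 a.2))

variable (p q) in
/-- `endpoints p q n s = (U_n⁻, U_n⁺)` for the symbol sequence `s ℓ = (X_ℓ, Y_ℓ)`. -/
def endpoints : ℕ → (ℕ → ℕ × ℕ) → ℝ × ℝ
  | 0, _ => (0, 1)
  | n + 1, s =>
    ((endpoints n s).1 + ((endpoints n s).2 - (endpoints n s).1) * cdf p q (s n).1 (s n).2,
     (endpoints n s).1 + ((endpoints n s).2 - (endpoints n s).1) * cdf p q (s n).1 ((s n).2 + 1))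

variable (p q) in
def lower (n : ℕ) (s : ℕ → ℕ × ℕ) : ℝ := (endpoints p q n s).1

variable (p q) in
def upper (n : ℕ) (s : ℕ → ℕ × ℕ) : ℝ := (endpoints p q n s).2

lemma lower_succ (n : ℕ) (s : ℕ → ℕ × ℕ) :
    lower p q (n + 1) s
      = lower p q n s + (upper p q n s - lower p q n s) * cdf p q (s n).1 (s n).2 :=
  rfl

lemma upper_succ (n : ℕ) (s : ℕ → ℕ × ℕ) :
    upper p q (n + 1) s
      = lower p q n s + (upper p q n s - lower p q n s) * cdf p q (s n).1 ((s n).2 + 1) :=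
  rfl

lemma eq_lower_upper_of_succ {A C : ℕ → ℝ} {s : ℕ → ℕ × ℕ} (hA0 : A 0 = 0) (hC0 : C 0 = 1)
    (hA : ∀ ℓ, A (ℓ + 1) = A ℓ + (C ℓ - A ℓ) * cdf p q (s ℓ).1 (s ℓ).2)
    (hC : ∀ ℓ, C (ℓ + 1) = A ℓ + (C ℓ - A ℓ) * cdf p q (s ℓ).1 ((s ℓ).2 + 1)) (n : ℕ) :
    A n = lower p q n s ∧ C n = upper p q n s := by
  induction n with
  | zero => exact ⟨hA0, hC0⟩
  | succ n ih => rw [hA, hC, lower_succ, upper_succ, ih.1, ih.2]; exact ⟨rfl, rfl⟩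

lemma upper_sub_lower (n : ℕ) (s : ℕ → ℕ × ℕ) :
    upper p q n s - lower p q n s = ∏ ℓ ∈ range n, width p q (s ℓ) := by
  induction n with
  | zero => simp [upper, lower, endpoints]
  | succ n ih => rw [prod_range_succ, ← ih, upper_succ, lower_succ, cdf_succ]; ring

lemma endpoints_congr {n : ℕ} {s s' : ℕ → ℕ × ℕ} (h : ∀ ℓ < n, s ℓ = s' ℓ) :
    endpoints p q n s = endpoints p q n s' := by
  induction n with
  | zero => rfl
  | succ n ih =>
    simp only [endpoints, ih fun ℓ hℓ => h ℓ (hℓ.trans n.lt_succ_self), h n n.lt_succ_self]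

/-- The first symbol `a = s 0` acts last: the interval of `s` is the image of the interval of the
shifted sequence under `x ↦ F_a + w_a x`. -/
lemma lower_upper_succ_eq_affine (n : ℕ) (s : ℕ → ℕ × ℕ) :
    lower p q (n + 1) s
        = cdf p q (s 0).1 (s 0).2 + width p q (s 0) * lower p q n (s ∘ Nat.succ) ∧
      upper p q (n + 1) s
        = cdf p q (s 0).1 (s 0).2 + width p q (s 0) * upper p q n (s ∘ Nat.succ) := by
  induction n with
  | zero => simp [lower, upper, endpoints, cdf_succ]
  | succ n ih =>
    rw [lower_succ (n + 1), upper_succ (n + 1), ih.1, ih.2, lower_succ n, upper_succ n]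
    constructor <;> (simp only [Function.comp_apply]; ring)

lemma lower_nonneg_and_upper_le_one (hq : ∀ i j, 0 ≤ q i j) (hp : ∀ i, HasSum (q i) (p i))
    (n : ℕ) (s : ℕ → ℕ × ℕ) : 0 ≤ lower p q n s ∧ upper p q n s ≤ 1 := by
  induction n generalizing s with
  | zero => simp [lower, upper, endpoints]
  | succ n ih =>
    obtain ⟨hlo, hup⟩ := lower_upper_succ_eq_affine (p := p) (q := q) n s
    obtain ⟨h0, h1⟩ := ih (s ∘ Nat.succ)
    have hw := width_nonneg hq hp (s 0)
    have := cdf_nonneg hq hp (s 0).1 (s 0).2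
    have := cdf_le_one hq hp (s 0).1 ((s 0).2 + 1)
    rw [cdf_succ] at this
    rw [hlo, hup]
    constructor <;> nlinarith

lemma lower_le_upper (hq : ∀ i j, 0 ≤ q i j) (hp : ∀ i, HasSum (q i) (p i))
    (n : ℕ) (s : ℕ → ℕ × ℕ) : lower p q n s ≤ upper p q n s :=
  sub_nonneg.1 <| (upper_sub_lower n s).symm ▸ prod_nonneg fun ℓ _ => width_nonneg hq hp (s ℓ)

lemma Ioc_lower_upper_succ_subset (hq : ∀ i j, 0 ≤ q i j) (hp : ∀ i, HasSum (q i) (p i))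
    (n : ℕ) (s : ℕ → ℕ × ℕ) :
    Set.Ioc (lower p q (n + 1) s) (upper p q (n + 1) s)
      ⊆ Set.Ioc (cdf p q (s 0).1 (s 0).2) (cdf p q (s 0).1 ((s 0).2 + 1)) := by
  obtain ⟨hlo, hup⟩ := lower_upper_succ_eq_affine (p := p) (q := q) n s
  obtain ⟨h0, h1⟩ := lower_nonneg_and_upper_le_one hq hp n (s ∘ Nat.succ)
  have hw := width_nonneg hq hp (s 0)
  apply Set.Ioc_subset_Ioc
  · rw [hlo]; nlinarith
  · rw [hup, cdf_succ]; nlinarith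

lemma lower_lt_upper (hq : ∀ i j, 0 ≤ q i j) (hp : ∀ i, HasSum (q i) (p i)) {n : ℕ}
    {s : ℕ → ℕ × ℕ} (hs : ∀ ℓ < n, 0 < q (s ℓ).1 (s ℓ).2) : lower p q n s < upper p q n s :=
  sub_pos.1 <| (upper_sub_lower n s).symm ▸
    prod_pos fun ℓ hℓ => width_pos hq hp (hs ℓ (mem_range.1 hℓ))

lemma neg_logb_upper_sub_lower (hq : ∀ i j, 0 ≤ q i j) (hp : ∀ i, HasSum (q i) (p i)) {n : ℕ}
    {s : ℕ → ℕ × ℕ} (hs : ∀ ℓ < n, 0 < q (s ℓ).1 (s ℓ).2) :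
    -Real.logb 2 (upper p q n s - lower p q n s)
      = ∑ ℓ ∈ range n, Real.logb 2 (p (s ℓ).1 / q (s ℓ).1 (s ℓ).2) := by
  rw [upper_sub_lower, Real.logb_prod _ _ fun ℓ hℓ => (width_pos hq hp (hs ℓ (mem_range.1 hℓ))).ne',
    ← sum_neg_distrib]
  exact sum_congr rfl fun ℓ _ => by rw [width, ← inv_div, Real.logb_inv, neg_neg]

lemma disjoint_Ioc_affine {a b c d : ℝ} (h : Disjoint (Set.Ioc a b) (Set.Ioc c d)) (e : ℝ)
    {w : ℝ} (hw : 0 ≤ w) :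
    Disjoint (Set.Ioc (e + w * a) (e + w * b)) (Set.Ioc (e + w * c) (e + w * d)) := by
  rcases hw.eq_or_lt with rfl | hw
  · simp
  · have hinj : Function.Injective (w * · + e) := fun x y hxy => by
      simpa [hw.ne'] using hxy
    simpa only [Set.image_affine_Ioc hw, add_comm e] using (Set.disjoint_image_iff hinj).2 h

lemma disjoint_Ioc_of_fst_eq (hq : ∀ i j, 0 ≤ q i j) (hp : ∀ i, HasSum (q i) (p i))
    (n : ℕ) {s s' : ℕ → ℕ × ℕ} (hfst : ∀ ℓ < n, (s ℓ).1 = (s' ℓ).1) (hne : ∃ ℓ < n, s ℓ ≠ s' ℓ) :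
    Disjoint (Set.Ioc (lower p q n s) (upper p q n s))
      (Set.Ioc (lower p q n s') (upper p q n s')) := by
  induction n generalizing s s' with
  | zero => obtain ⟨ℓ, hℓ, -⟩ := hne; exact absurd hℓ ℓ.not_lt_zero
  | succ n ih =>
    by_cases h0 : s 0 = s' 0
    · obtain ⟨ℓ, hℓ, hne⟩ := hne
      obtain ⟨k, rfl⟩ := Nat.exists_eq_succ_of_ne_zero (show ℓ ≠ 0 by rintro rfl; exact hne h0)
      have htail := ih (s := s ∘ Nat.succ) (s' := s' ∘ Nat.succ)
        (fun m hm => hfst (m + 1) (by omega)) ⟨k, by omega, hne⟩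
      obtain ⟨hlo, hup⟩ := lower_upper_succ_eq_affine (p := p) (q := q) n s
      obtain ⟨hlo', hup'⟩ := lower_upper_succ_eq_affine (p := p) (q := q) n s'
      rw [hlo, hup, hlo', hup', ← h0]
      exact disjoint_Ioc_affine htail _ (width_nonneg hq hp (s 0))
    · have hsnd : (s 0).2 ≠ (s' 0).2 := fun h => h0 (Prod.ext (hfst 0 n.succ_pos) h)
      refine .mono (Ioc_lower_upper_succ_subset hq hp n s)
        (Ioc_lower_upper_succ_subset hq hp n s') ?_
      rw [← hfst 0 n.succ_pos]
      exact (cdf_mono hq hp (s 0).1).pairwise_disjoint_on_Ioc_succ hsnd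

lemma endpoints_extend (n : ℕ) (s : ℕ → ℕ × ℕ) :
    endpoints p q n (Function.extend Fin.val (fun ℓ : Fin n => s ℓ) 0) = endpoints p q n s :=
  endpoints_congr fun ℓ hℓ => Fin.val_injective.extend_apply _ _ (⟨ℓ, hℓ⟩ : Fin n)

lemma prod_eq_prod_mul_upper_sub_lower (hq : ∀ i j, 0 ≤ q i j) (hp : ∀ i, HasSum (q i) (p i))
    {n : ℕ} (v : Fin n → ℕ × ℕ) :
    ∏ ℓ, q (v ℓ).1 (v ℓ).2 = (∏ ℓ, p (v ℓ).1) *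
      (upper p q n (Function.extend Fin.val v 0) - lower p q n (Function.extend Fin.val v 0)) := by
  rw [upper_sub_lower, ← Fin.prod_univ_eq_prod_range, ← prod_mul_distrib]
  simp only [Fin.val_injective.extend_apply, mul_width hq hp]

lemma injOn_fst_comp (hq : ∀ i j, 0 ≤ q i j) (hp : ∀ i, HasSum (q i) (p i)) (n : ℕ) (d : ℝ) :
    Set.InjOn (fun v : Fin n → ℕ × ℕ => Prod.fst ∘ v)
      {v | d ∈ Set.Ioc (lower p q n (Function.extend Fin.val v 0))
        (upper p q n (Function.extend Fin.val v 0))} := by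
  intro v hv v' hv' hfst
  by_contra hne
  obtain ⟨ℓ, hℓ⟩ := Function.ne_iff.1 hne
  refine Set.disjoint_left.1
    (disjoint_Ioc_of_fst_eq hq hp n (fun k hk => ?_) ⟨ℓ, ℓ.isLt, ?_⟩) hv hv'
  · simpa [Fin.val_injective.extend_apply _ _ (⟨k, hk⟩ : Fin n)] using congrFun hfst ⟨k, hk⟩
  · simpa [Fin.val_injective.extend_apply] using hℓ

lemma tsum_fin_pi_prod {β : Type*} (g : β → ℝ≥0∞) (n : ℕ) :
    ∑' x : Fin n → β, ∏ ℓ, g (x ℓ) = (∑' b, g b) ^ n := by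
  induction n with
  | zero => simp
  | succ n ih =>
    rw [← (Fin.consEquiv fun _ => β).tsum_eq, ENNReal.tsum_prod', pow_succ']
    simp only [Fin.consEquiv_apply, Fin.prod_univ_succ, Fin.cons_zero, Fin.cons_succ,
      ENNReal.tsum_mul_left, ih, ENNReal.tsum_mul_right]

lemma ae_pos_of_measure_preimage_singleton {Ω α : Type*} [MeasurableSpace Ω] [Countable α]
    {μ : Measure Ω} {Z : ℕ → Ω → α} {q : α → ℝ}
    (hlaw : ∀ ℓ a, μ (Z ℓ ⁻¹' {a}) = ENNReal.ofReal (q a)) :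
    ∀ᵐ ω ∂μ, ∀ ℓ, 0 < q (Z ℓ ω) := by
  refine ae_all_iff.2 fun ℓ => ae_iff.2 ?_
  have : {ω | ¬ 0 < q (Z ℓ ω)} = ⋃ a ∈ {a | q a ≤ 0}, Z ℓ ⁻¹' {a} := by ext; simp
  rw [this, measure_biUnion_null_iff (Set.to_countable _)]
  exact fun a ha => by rw [hlaw, ENNReal.ofReal_eq_zero.2 ha]

section IID

variable {Ω α : Type*} [MeasurableSpace Ω] [MeasurableSpace α] [Countable α]
  [MeasurableSingletonClass α] {μ : Measure Ω} {Z : ℕ → Ω → α}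

lemma measure_setOf_fin_mem (hZ : ∀ ℓ, Measurable (Z ℓ)) (hind : iIndepFun Z μ) (n : ℕ)
    (T : Set (Fin n → α)) :
    μ {ω | (fun ℓ : Fin n => Z ℓ ω) ∈ T} = ∑' v : T, ∏ ℓ : Fin n, μ (Z ℓ ⁻¹' {v.1 ℓ}) := by
  have := hind.isProbabilityMeasure
  have (ℓ : Fin n) : IsProbabilityMeasure (μ.map (Z ℓ)) :=
    Measure.isProbabilityMeasure_map (hZ ℓ).aemeasurable
  have hT : MeasurableSet T := T.to_countable.measurableSet
  change μ ((fun ω (ℓ : Fin n) => Z ℓ ω) ⁻¹' T) = _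
  rw [← Measure.map_apply (measurable_pi_lambda (fun ω (ℓ : Fin n) => Z ℓ ω) fun ℓ => hZ ℓ) hT,
    (hind.precomp Fin.val_injective).map_fun_eq_pi_map fun (ℓ : Fin n) => (hZ ℓ).aemeasurable,
    ← Measure.tsum_indicator_apply_singleton _ _ hT,
    _root_.tsum_subtype T fun v => ∏ ℓ : Fin n, μ (Z ℓ ⁻¹' {v ℓ})]
  congr 1 with v
  simp [Measure.pi_singleton, Measure.map_apply (hZ _) (measurableSet_singleton _)]

lemma tendstoInMeasure_average_of_iid (hZ : ∀ ℓ, Measurable (Z ℓ)) (hind : iIndepFun Z μ)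
    {q : α → ℝ} (hq : ∀ a, 0 ≤ q a) (hlaw : ∀ ℓ a, μ (Z ℓ ⁻¹' {a}) = ENNReal.ofReal (q a))
    {f : α → ℝ} (hf : Summable fun a => q a * |f a|) :
    TendstoInMeasure μ (fun n ω => (∑ ℓ ∈ range n, f (Z ℓ ω)) / n) atTop
      (fun _ => ∑' a, q a * f a) := by
  have := hind.isProbabilityMeasure
  have hfm : Measurable f := measurable_of_countable f
  have hlaw' (ℓ : ℕ) (a : α) : μ.map (Z ℓ) {a} = ENNReal.ofReal (q a) := by
    rw [Measure.map_apply (hZ ℓ) (measurableSet_singleton a), hlaw]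
  have hident (ℓ : ℕ) : IdentDistrib (fun ω => f (Z ℓ ω)) (fun ω => f (Z 0 ω)) μ μ :=
    IdentDistrib.comp ⟨(hZ ℓ).aemeasurable, (hZ 0).aemeasurable,
      Measure.ext_of_singleton fun a => by rw [hlaw', hlaw']⟩ hfm
  have hint : Integrable f (μ.map (Z 0)) := by
    refine ⟨hfm.aestronglyMeasurable, ?_⟩
    rw [HasFiniteIntegral, lintegral_countable']
    simp_rw [hlaw', Real.enorm_eq_ofReal_abs, ← ENNReal.ofReal_mul (abs_nonneg _), mul_comm |f _|]
    rw [← ENNReal.ofReal_tsum_of_nonneg (fun a => mul_nonneg (hq a) (abs_nonneg _)) hf]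
    exact ENNReal.ofReal_lt_top
  have hmean : ∫ ω, f (Z 0 ω) ∂μ = ∑' a, q a * f a := by
    rw [← integral_map (hZ 0).aemeasurable hfm.aestronglyMeasurable, integral_countable hint]
    simp_rw [measureReal_def, hlaw', ENNReal.toReal_ofReal (hq _), smul_eq_mul]
  have hslln := strong_law_ae (fun ℓ ω => f (Z ℓ ω))
    ((integrable_map_measure hfm.aestronglyMeasurable (hZ 0).aemeasurable).1 hint)
    (fun i j hij => (hind.indepFun hij).comp hfm hfm) hident
  refine tendstoInMeasure_of_tendsto_ae (fun n => ?_) ?_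
  · exact ((Finset.measurable_sum _ fun ℓ _ => hfm.comp (hZ ℓ)).div_const _).aestronglyMeasurable
  · filter_upwards [hslln] with ω hω
    simpa [hmean, div_eq_inv_mul] using hω

end IID

lemma tsum_prod_le_of_subset (hq : ∀ i j, 0 ≤ q i j) (hp : ∀ i, HasSum (q i) (p i))
    (hpsum : HasSum p 1) {n : ℕ} {d ε : ℝ} {T : Set (Fin n → ℕ × ℕ)}
    (hT : ∀ v ∈ T, d ∈ Set.Ioc (lower p q n (Function.extend Fin.val v 0))
        (upper p q n (Function.extend Fin.val v 0)) ∧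
        upper p q n (Function.extend Fin.val v 0) - lower p q n (Function.extend Fin.val v 0) ≤ ε) :
    ∑' v : T, ∏ ℓ, ENNReal.ofReal (q (v.1 ℓ).1 (v.1 ℓ).2) ≤ ENNReal.ofReal ε := by
  have hp0 := nonneg_of_hasSum hq hp
  have hinj : Function.Injective (T.domRestrict fun v => Prod.fst ∘ v) :=
    ((injOn_fst_comp hq hp n d).mono fun v hv => (hT v hv).1).injective
  calc _ ≤ ∑' v : T, ENNReal.ofReal ε * ∏ ℓ, ENNReal.ofReal (p (v.1 ℓ).1) := by
        refine ENNReal.tsum_le_tsum fun ⟨v, hv⟩ => ?_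
        rw [← ENNReal.ofReal_prod_of_nonneg fun ℓ _ => hq _ _,
          prod_eq_prod_mul_upper_sub_lower hq hp, ← ENNReal.ofReal_prod_of_nonneg fun ℓ _ => hp0 _,
          ← ENNReal.ofReal_mul' (prod_nonneg fun ℓ _ => hp0 _), mul_comm ε]
        exact ENNReal.ofReal_le_ofReal
          (by gcongr; exacts [prod_nonneg fun ℓ _ => hp0 _, (hT v hv).2])
    _ ≤ ENNReal.ofReal ε * ∑' x : Fin n → ℕ, ∏ ℓ, ENNReal.ofReal (p (x ℓ)) := by
        rw [ENNReal.tsum_mul_left]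
        gcongr
        exact ENNReal.tsum_comp_le_tsum_of_injective hinj fun x => ∏ ℓ, ENNReal.ofReal (p (x ℓ))
    _ = ENNReal.ofReal ε := by
        rw [tsum_fin_pi_prod (fun i => ENNReal.ofReal (p i)),
          ← ENNReal.ofReal_tsum_of_nonneg hp0 hpsum.summable, hpsum.tsum_eq]
        simp

variable {Ω : Type*} [MeasurableSpace Ω] {μ : Measure Ω} {Z : ℕ → Ω → ℕ × ℕ}

lemma measure_mem_Ioc_le (hq : ∀ i j, 0 ≤ q i j) (hp : ∀ i, HasSum (q i) (p i))
    (hpsum : HasSum p 1) (hZ : ∀ ℓ, Measurable (Z ℓ)) (hind : iIndepFun Z μ)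
    (hlaw : ∀ ℓ a, μ (Z ℓ ⁻¹' {a}) = ENNReal.ofReal (q a.1 a.2)) (n : ℕ) (d ε : ℝ) :
    μ {ω | d ∈ Set.Ioc (lower p q n (Z · ω)) (upper p q n (Z · ω)) ∧
      upper p q n (Z · ω) - lower p q n (Z · ω) ≤ ε} ≤ ENNReal.ofReal ε := by
  have hext (ω : Ω) := endpoints_extend (p := p) (q := q) n (Z · ω)
  calc _ = μ {ω | (fun ℓ : Fin n => Z ℓ ω) ∈
        {v : Fin n → ℕ × ℕ | d ∈ Set.Ioc (lower p q n (Function.extend Fin.val v 0))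
          (upper p q n (Function.extend Fin.val v 0)) ∧
          upper p q n (Function.extend Fin.val v 0) - lower p q n (Function.extend Fin.val v 0)
            ≤ ε}} := by
        simp only [Set.mem_ofPred_eq, lower, upper, hext]
    _ ≤ ENNReal.ofReal ε := by
        rw [measure_setOf_fin_mem hZ hind]
        simp only [hlaw]
        exact tsum_prod_le_of_subset hq hp hpsum fun v hv => hv

lemma measure_floor_ne_le (hq : ∀ i j, 0 ≤ q i j) (hp : ∀ i, HasSum (q i) (p i))
    (hpsum : HasSum p 1) (hZ : ∀ ℓ, Measurable (Z ℓ)) (hind : iIndepFun Z μ)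
    (hlaw : ∀ ℓ a, μ (Z ℓ ⁻¹' {a}) = ENNReal.ofReal (q a.1 a.2)) (n t c : ℕ) :
    μ {ω | ⌊(2 : ℝ) ^ t * lower p q n (Z · ω)⌋ ≠ ⌊(2 : ℝ) ^ t * upper p q n (Z · ω)⌋ ∧
      upper p q n (Z · ω) - lower p q n (Z · ω) ≤ (1 / 2) ^ (t + c)}
      ≤ ENNReal.ofReal ((1 / 2) ^ c) := by
  calc _ ≤ μ (⋃ k ∈ Ioc (0 : ℕ) (2 ^ t), {ω | (k : ℝ) / 2 ^ t ∈
        Set.Ioc (lower p q n (Z · ω)) (upper p q n (Z · ω)) ∧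
        upper p q n (Z · ω) - lower p q n (Z · ω) ≤ (1 / 2) ^ (t + c)}) := by
        refine measure_mono fun ω ⟨hne, hsmall⟩ => ?_
        obtain ⟨h0, h1⟩ := lower_nonneg_and_upper_le_one hq hp n (Z · ω)
        obtain ⟨k, hk, hmem⟩ :=
          exists_dyadic_mem_Ioc_of_floor_ne h0 (lower_le_upper hq hp n _) h1 hne
        exact Set.mem_biUnion hk ⟨hmem, hsmall⟩
    _ ≤ ∑ k ∈ Ioc (0 : ℕ) (2 ^ t), ENNReal.ofReal ((1 / 2) ^ (t + c)) :=
        (measure_biUnion_finset_le _ _).trans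
          (sum_le_sum fun k _ => measure_mem_Ioc_le hq hp hpsum hZ hind hlaw n _ _)
    _ = ENNReal.ofReal ((1 / 2) ^ c) := by
        rw [sum_const, Nat.card_Ioc, Nat.sub_zero, nsmul_eq_mul, ← ENNReal.ofReal_natCast,
          ← ENNReal.ofReal_mul (by positivity)]
        congr 1
        push_cast
        rw [pow_add, ← mul_assoc, ← mul_pow]
        norm_num

theorem tendsto_measure_lt_abs_commonBits_div_sub {Ω : Type*} [MeasurableSpace Ω]
    {μ : Measure Ω} {A C : ℕ → Ω → ℝ} {E : ℝ} (hA : ∀ n ω, 0 ≤ A n ω) (hC : ∀ n ω, C n ω ≤ 1)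
    (hAC : ∀ n, ∀ᵐ ω ∂μ, A n ω < C n ω)
    (hinfo : TendstoInMeasure μ (fun n ω => -Real.logb 2 (C n ω - A n ω) / n) atTop fun _ => E)
    (hbad : ∀ n t c : ℕ, μ {ω | ⌊(2 : ℝ) ^ t * A n ω⌋ ≠ ⌊(2 : ℝ) ^ t * C n ω⌋ ∧
      C n ω - A n ω ≤ (1 / 2) ^ (t + c)} ≤ ENNReal.ofReal ((1 / 2) ^ c))
    {δ : ℝ} (hδ : 0 < δ) :
    Tendsto (fun n => μ {ω | δ < |commonBits (A n ω) (C n ω) / n - E|}) atTop (𝓝 0) := by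
  have hdev := tendstoInMeasure_iff_dist.1 hinfo (δ / 4) (by positivity)
  simp only [Real.dist_eq] at hdev
  have hgeom : Tendsto (fun n : ℕ => ENNReal.ofReal ((1 / 2) ^ ⌈n * (δ / 2)⌉₊)) atTop (𝓝 0) := by
    have hceil : Tendsto (fun n : ℕ => ⌈(n : ℝ) * (δ / 2)⌉₊) atTop atTop :=
      tendsto_nat_ceil_atTop.comp (tendsto_natCast_atTop_atTop.atTop_mul_const (by positivity))
    simpa using ENNReal.tendsto_ofReal
      ((tendsto_pow_atTop_nhds_zero_of_lt_one (r := (1 / 2 : ℝ)) (by norm_num) (by norm_num)).comp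
        hceil)
  refine tendsto_of_tendsto_of_tendsto_of_le_of_le' tendsto_const_nhds
    (by simpa only [add_zero] using hdev.add hgeom) (.of_forall fun _ => zero_le) ?_
  filter_upwards [eventually_ge_atTop ⌈8 / δ⌉₊] with n hn
  have hn' : 8 ≤ n * δ := by rw [← div_le_iff₀ hδ]; exact Nat.ceil_le.1 hn
  calc _ ≤ μ ({ω | δ / 4 ≤ |-Real.logb 2 (C n ω - A n ω) / n - E|} ∪
        {ω | ⌊(2 : ℝ) ^ ⌈n * (E - δ)⌉₊ * A n ω⌋ ≠ ⌊(2 : ℝ) ^ ⌈n * (E - δ)⌉₊ * C n ω⌋ ∧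
          C n ω - A n ω ≤ (1 / 2) ^ (⌈n * (E - δ)⌉₊ + ⌈n * (δ / 2)⌉₊)}) := by
        refine measure_mono_ae ?_
        filter_upwards [hAC n] with ω hω hdev
        exact abs_neg_logb_sub_le_or_floor_ne (hA n ω) hω (hC n ω) hn' hdev
    _ ≤ _ := (measure_union_le _ _).trans (add_le_add le_rfl (hbad _ _ _))

lemma summable_div_two_pow_succ {b : ℕ → ℝ} (hb : ∀ j, b j = 0 ∨ b j = 1) :
    Summable fun j => b j / 2 ^ (j + 1) := by
  refine summable_geometric_two.of_nonneg_of_le (fun j => ?_) fun j => ?_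
  · rcases hb j with h | h <;> simp [h]
  · rw [one_div_pow]
    rcases hb j with h | h <;> norm_num [h, pow_succ]

end RandomnessExtraction

end

open MeasureTheory RandomnessExtraction

theorem randomness_extraction_rate_general
    {Ω : Type} [MeasurableSpace Ω] (μ : Measure Ω)
    (p : ℕ → ℝ) (hpsum : HasSum p 1)
    (b : ℕ → ℕ → ℝ) (hb : ∀ i j, b i j = 0 ∨ b i j = 1)
    (hexp : ∀ i, p i = ∑' j : ℕ, b i j / 2 ^ (j + 1))
    (hE : Summable fun ij : ℕ × ℕ =>
      (b ij.1 ij.2 / 2 ^ (ij.2 + 1)) * Real.logb 2 (p ij.1 / (b ij.1 ij.2 / 2 ^ (ij.2 + 1))))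
    (X Y : ℕ → Ω → ℕ)
    (hmeas : ∀ ℓ, Measurable fun ω => (X ℓ ω, Y ℓ ω))
    (hindep : ProbabilityTheory.iIndepFun
      (fun ℓ ω => (X ℓ ω, Y ℓ ω)) μ)
    (hdist : ∀ ℓ i j, μ {ω | X ℓ ω = i ∧ Y ℓ ω = j} = ENNReal.ofReal (b i j / 2 ^ (j + 1)))
    (Um Up : ℕ → Ω → ℝ)
    (hUm0 : ∀ ω, Um 0 ω = 0) (hUp0 : ∀ ω, Up 0 ω = 1)
    (hUm : ∀ ℓ ω, Um (ℓ + 1) ω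
      = Um ℓ ω + (Up ℓ ω - Um ℓ ω)
          * ((1 / p (X ℓ ω)) * ∑ k ∈ Finset.range (Y ℓ ω), b (X ℓ ω) k / 2 ^ (k + 1)))
    (hUp : ∀ ℓ ω, Up (ℓ + 1) ω
      = Um ℓ ω + (Up ℓ ω - Um ℓ ω)
          * ((1 / p (X ℓ ω)) * ∑ k ∈ Finset.range (Y ℓ ω + 1), b (X ℓ ω) k / 2 ^ (k + 1)))
    (R : ℕ → Ω → ℕ)
    (hR : ∀ n ω, R n ω = sSup {t : ℕ | ⌊(2 : ℝ) ^ t * Um n ω⌋ = ⌊(2 : ℝ) ^ t * Up n ω⌋}) :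
    ∀ δ : ℝ, 0 < δ →
      Filter.Tendsto
        (fun n : ℕ => μ {ω | δ <
          |(R n ω : ℝ) / (n : ℝ)
            - ∑' ij : ℕ × ℕ, (b ij.1 ij.2 / 2 ^ (ij.2 + 1))
                * Real.logb 2 (p ij.1 / (b ij.1 ij.2 / 2 ^ (ij.2 + 1)))|})
        Filter.atTop (nhds 0) := by
  intro δ hδ
  set q : ℕ → ℕ → ℝ := fun i j => b i j / 2 ^ (j + 1)
  set Z : ℕ → Ω → ℕ × ℕ := fun ℓ ω => (X ℓ ω, Y ℓ ω)
  have hq (i j : ℕ) : 0 ≤ q i j := by rcases hb i j with h | h <;> simp [q, h]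
  have hp (i : ℕ) : HasSum (q i) (p i) := hexp i ▸ (summable_div_two_pow_succ (hb i)).hasSum
  have hlaw (ℓ : ℕ) (a : ℕ × ℕ) : μ (Z ℓ ⁻¹' {a}) = ENNReal.ofReal (q a.1 a.2) := by
    rw [← hdist ℓ a.1 a.2]; congr 1; ext; simp [Z, Prod.ext_iff]
  have hU (ω : Ω) := eq_lower_upper_of_succ (p := p) (q := q) (A := (Um · ω)) (C := (Up · ω))
    (s := (Z · ω)) (hUm0 ω) (hUp0 ω) (hUm · ω) (hUp · ω)
  obtain rfl : Um = fun n ω => lower p q n (Z · ω) := funext₂ fun n ω => (hU ω n).1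
  obtain rfl : Up = fun n ω => upper p q n (Z · ω) := funext₂ fun n ω => (hU ω n).2
  obtain rfl : R = fun n ω => commonBits (lower p q n (Z · ω)) (upper p q n (Z · ω)) :=
    funext₂ hR
  have hpos := ae_pos_of_measure_preimage_singleton hlaw
  have hinfo := tendstoInMeasure_average_of_iid hmeas hindep (fun a => hq a.1 a.2) hlaw
    (f := fun a => Real.logb 2 (p a.1 / q a.1 a.2))
    (by simpa only [abs_of_nonneg (logb_div_nonneg hq hp _ _)] using hE)
  refine tendsto_measure_lt_abs_commonBits_div_sub
    (fun n ω => (lower_nonneg_and_upper_le_one hq hp n _).1)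
    (fun n ω => (lower_nonneg_and_upper_le_one hq hp n _).2)
    (fun n => hpos.mono fun ω hω => lower_lt_upper hq hp fun ℓ _ => hω ℓ)
    (hinfo.congr_left fun n => hpos.mono fun ω hω => ?_)
    (measure_floor_ne_le hq hp hpsum hmeas hindep hlaw) hδ
  exact congrArg (· / (n : ℝ)) (neg_logb_upper_sub_lower hq hp fun ℓ _ => hω ℓ).symm

/-- randomness extraction: let `(p_i)` be a probability vector with binary
digits `b i j ∈ {0,1}` (the digit of weight `2^{−(j+1)}`), `p_{i,j} = b i j·2^{−(j+1)}`,
and suppose `ℰ = Σ_{i,j} p_{i,j}·log₂(p_i/p_{i,j})` is finite (summable).  Let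
`(X_ℓ, Y_ℓ)_{ℓ≥0}` be i.i.d. with `P(X = i, Y = j) = p_{i,j}`, let
`F_i(n) = (1/p_i)·Σ_{k<n} p_{i,k}`, and define recursively `U₀⁻ = 0`, `U₀⁺ = 1`,
`U_{ℓ+1}⁻ = U_ℓ⁻ + (U_ℓ⁺ − U_ℓ⁻)·F_{X_ℓ}(Y_ℓ)`,
`U_{ℓ+1}⁺ = U_ℓ⁻ + (U_ℓ⁺ − U_ℓ⁻)·F_{X_ℓ}(Y_ℓ + 1)`
(`Y` is `0`-based: its value `j` denotes the digit of weight `2^{−(j+1)}`).  With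
`R_n = max{t ≥ 0 : ⌊2^t U_n⁻⌋ = ⌊2^t U_n⁺⌋}`, one has `R_n/n → ℰ` in probability. -/
theorem randomness_extraction_rate
    {Ω : Type} [MeasurableSpace Ω] (μ : Measure Ω) [IsProbabilityMeasure μ]
    (p : ℕ → ℝ) (hpnn : ∀ i, 0 ≤ p i) (hpsum : HasSum p 1)
    (b : ℕ → ℕ → ℝ) (hb : ∀ i j, b i j = 0 ∨ b i j = 1)
    (hexp : ∀ i, p i = ∑' j : ℕ, b i j / 2 ^ (j + 1))
    (hE : Summable fun ij : ℕ × ℕ =>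
      (b ij.1 ij.2 / 2 ^ (ij.2 + 1)) * Real.logb 2 (p ij.1 / (b ij.1 ij.2 / 2 ^ (ij.2 + 1))))
    (X Y : ℕ → Ω → ℕ)
    (hmeas : ∀ ℓ, Measurable fun ω => (X ℓ ω, Y ℓ ω))
    (hindep : ProbabilityTheory.iIndepFun
      (fun ℓ ω => (X ℓ ω, Y ℓ ω)) μ)
    (hdist : ∀ ℓ i j, μ {ω | X ℓ ω = i ∧ Y ℓ ω = j} = ENNReal.ofReal (b i j / 2 ^ (j + 1)))
    (Um Up : ℕ → Ω → ℝ)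
    (hUm0 : ∀ ω, Um 0 ω = 0) (hUp0 : ∀ ω, Up 0 ω = 1)
    (hUm : ∀ ℓ ω, Um (ℓ + 1) ω
      = Um ℓ ω + (Up ℓ ω - Um ℓ ω)
          * ((1 / p (X ℓ ω)) * ∑ k ∈ Finset.range (Y ℓ ω), b (X ℓ ω) k / 2 ^ (k + 1)))
    (hUp : ∀ ℓ ω, Up (ℓ + 1) ω
      = Um ℓ ω + (Up ℓ ω - Um ℓ ω)
          * ((1 / p (X ℓ ω)) * ∑ k ∈ Finset.range (Y ℓ ω + 1), b (X ℓ ω) k / 2 ^ (k + 1)))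
    (R : ℕ → Ω → ℕ)
    (hR : ∀ n ω, R n ω = sSup {t : ℕ | ⌊(2 : ℝ) ^ t * Um n ω⌋ = ⌊(2 : ℝ) ^ t * Up n ω⌋}) :
    ∀ δ : ℝ, 0 < δ →
      Filter.Tendsto
        (fun n : ℕ => μ {ω | δ <
          |(R n ω : ℝ) / (n : ℝ)
            - ∑' ij : ℕ × ℕ, (b ij.1 ij.2 / 2 ^ (ij.2 + 1))
                * Real.logb 2 (p ij.1 / (b ij.1 ij.2 / 2 ^ (ij.2 + 1)))|})
        Filter.atTop (nhds 0) :=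
  randomness_extraction_rate_general μ p hpsum b hb hexp hE X Y hmeas hindep hdist Um Up hUm0 hUp0
    hUm hUp R hR
end

section
/- For each j ≥ 1 let p_j = e^{−2^{−j}} / (1 + e^{−2^{−j}}) (equivalently p_j/(1 − p_j) = e^{−2^{−j}}), and let (X_j)_{j≥1} be independent random variables with P(X_j = 2^{−j}) = p_j and P(X_j = 0) = 1 − p_j. Then the random variable X = Σ_{j=1}^∞ X_j is absolutely continuous with probability density f_X(x) = e^{−x}/(1 − e^{−1}) for x ∈ [0,1] (and 0 elsewhere); i.e., X is a truncated exponential random variable on [0,1]. -/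
/-!
The summands are the binary digits of `X = ∑ X j`, and under the truncated exponential law the
binary digits are independent with exactly the given laws. Write `p n = P(X n = 2^{-(n+1)})`,
`S n = ∑_{j<n} X j` and `F t = (1 - e^{-t}) / (1 - e^{-1})`. Conditioning on the last digit, and
using that `S n` lies on the grid `2^{-n}ℕ`, gives
`P(S (n+1) < k/2^(n+1)) = (1 - p n) P(S n < ⌈k/2⌉/2^n) + p n P(S n < ⌊k/2⌋/2^n)`; `F` satisfies
the same recursion because `p n / (1 - p n) = e^{-2^{-(n+1)}}`, hence `P(S n < k/2^n) = F(k/2^n)`.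
Since `S n ≤ X ≤ S n + 2^{-n}`, the distribution function of `X` is squeezed between values of `F`
at neighbouring dyadic points, so it is `F`.
-/

open MeasureTheory ProbabilityTheory Filter Set Real
open scoped ENNReal Topology

namespace BernoulliConvolution

noncomputable def digit (j : ℕ) : ℝ := ((2 : ℝ) ^ (j + 1))⁻¹

noncomputable def digitProb (j : ℕ) : ℝ := exp (-digit j) / (1 + exp (-digit j))

noncomputable def truncExpCDF (t : ℝ) : ℝ := (1 - exp (-t)) / (1 - exp (-1))

noncomputable def truncExpMeasure : Measure ℝ :=
  (volume.restrict (Icc 0 1)).withDensity fun x => ENNReal.ofReal (exp (-x) / (1 - exp (-1)))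

lemma digit_pos (j : ℕ) : 0 < digit j := by unfold digit; positivity

lemma digitProb_nonneg (j : ℕ) : 0 ≤ digitProb j := by unfold digitProb; positivity

lemma digitProb_le_one (j : ℕ) : digitProb j ≤ 1 :=
  div_le_one_of_le₀ (le_add_of_nonneg_left zero_le_one) (by positivity)

lemma summable_digit : Summable digit := by
  convert summable_geometric_two' 1 using 2 with j
  rw [digit, pow_succ]; field_simp

lemma tsum_digit_add (n : ℕ) : ∑' j, digit (j + n) = ((2 : ℝ) ^ n)⁻¹ := by
  refine (tsum_congr fun j => ?_).trans (tsum_geometric_two' ((2 : ℝ) ^ n)⁻¹)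
  rw [digit, pow_succ, pow_add]; field_simp

lemma natCast_div_two_pow_eq_two_mul (i n : ℕ) :
    (i : ℝ) / 2 ^ n = ((2 * i : ℕ) : ℝ) / 2 ^ (n + 1) := by
  push_cast; rw [pow_succ]; field_simp

lemma natCast_div_two_pow_add_digit (i n : ℕ) :
    (i : ℝ) / 2 ^ n + digit n = ((2 * i + 1 : ℕ) : ℝ) / 2 ^ (n + 1) := by
  rw [digit]; push_cast; rw [pow_succ]; field_simp

lemma natCast_div_two_pow_lt_iff (i k n : ℕ) :
    (i : ℝ) / 2 ^ n < k / 2 ^ (n + 1) ↔ 2 * i < k := by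
  rw [natCast_div_two_pow_eq_two_mul, div_lt_div_iff_of_pos_right (by positivity), Nat.cast_lt]

lemma natCast_div_two_pow_lt_sub_digit_iff (i k n : ℕ) :
    (i : ℝ) / 2 ^ n < k / 2 ^ (n + 1) - digit n ↔ 2 * i + 1 < k := by
  rw [lt_sub_iff_add_lt, natCast_div_two_pow_add_digit,
    div_lt_div_iff_of_pos_right (by positivity), Nat.cast_lt]

def IsBinaryDigits (x : ℕ → ℝ) : Prop := ∀ j, x j = 0 ∨ x j = digit j

namespace IsBinaryDigits

variable {x : ℕ → ℝ}

lemma nonneg (hx : IsBinaryDigits x) (j : ℕ) : 0 ≤ x j := by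
  rcases hx j with h | h <;> rw [h]
  exact (digit_pos j).le

lemma le_digit (hx : IsBinaryDigits x) (j : ℕ) : x j ≤ digit j := by
  rcases hx j with h | h <;> rw [h]
  exact (digit_pos j).le

lemma summable (hx : IsBinaryDigits x) : Summable x :=
  summable_digit.of_nonneg_of_le hx.nonneg hx.le_digit

lemma exists_sum_range_eq (hx : IsBinaryDigits x) (n : ℕ) :
    ∃ i : ℕ, ∑ j ∈ Finset.range n, x j = i / 2 ^ n := by
  induction n with
  | zero => exact ⟨0, by simp⟩
  | succ n ih =>
    obtain ⟨i, hi⟩ := ih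
    rw [Finset.sum_range_succ, hi]
    rcases hx n with h | h
    · exact ⟨2 * i, by rw [h, add_zero, natCast_div_two_pow_eq_two_mul]⟩
    · exact ⟨2 * i + 1, by rw [h, natCast_div_two_pow_add_digit]⟩

lemma sum_range_le_tsum (hx : IsBinaryDigits x) (n : ℕ) :
    ∑ j ∈ Finset.range n, x j ≤ ∑' j, x j :=
  hx.summable.sum_le_tsum _ fun j _ => hx.nonneg j

lemma tsum_le_sum_range_add (hx : IsBinaryDigits x) (n : ℕ) :
    ∑' j, x j ≤ ∑ j ∈ Finset.range n, x j + ((2 : ℝ) ^ n)⁻¹ := by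
  rw [← hx.summable.sum_add_tsum_nat_add n, ← tsum_digit_add n]
  exact add_le_add_right (((summable_nat_add_iff n).2 hx.summable).tsum_le_tsum
    (fun j => hx.le_digit (j + n)) ((summable_nat_add_iff n).2 summable_digit)) _

lemma tsum_le_one (hx : IsBinaryDigits x) : ∑' j, x j ≤ 1 := by
  simpa using hx.tsum_le_sum_range_add 0

lemma tsum_le_of_sum_range_lt (hx : IsBinaryDigits x) {n k : ℕ}
    (h : ∑ j ∈ Finset.range n, x j < k / 2 ^ n) : ∑' j, x j ≤ k / 2 ^ n := by
  obtain ⟨i, hi⟩ := hx.exists_sum_range_eq n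
  rw [hi, div_lt_div_iff_of_pos_right (by positivity), Nat.cast_lt] at h
  calc ∑' j, x j ≤ i / 2 ^ n + ((2 : ℝ) ^ n)⁻¹ := hi ▸ hx.tsum_le_sum_range_add n
    _ = ((i + 1 : ℕ) : ℝ) / 2 ^ n := by push_cast; ring
    _ ≤ k / 2 ^ n := by gcongr; exact_mod_cast h

end IsBinaryDigits

lemma one_sub_exp_neg_one_pos : 0 < 1 - exp (-1) := by
  rw [sub_pos, exp_lt_one_iff]; norm_num

lemma truncExpCDF_nonneg {t : ℝ} (ht : 0 ≤ t) : 0 ≤ truncExpCDF t :=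
  div_nonneg (sub_nonneg.2 (exp_le_one_iff.2 (neg_nonpos.2 ht))) one_sub_exp_neg_one_pos.le

lemma continuous_truncExpCDF : Continuous truncExpCDF := by
  unfold truncExpCDF; fun_prop

lemma truncExpCDF_zero : truncExpCDF 0 = 0 := by simp [truncExpCDF]

lemma truncExpCDF_one : truncExpCDF 1 = 1 := div_self one_sub_exp_neg_one_pos.ne'

lemma truncExpCDF_add_two_mul (t c : ℝ) :
    truncExpCDF (t + 2 * c) * (1 - exp (-c) / (1 + exp (-c)))
      + truncExpCDF t * (exp (-c) / (1 + exp (-c))) = truncExpCDF (t + c) := by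
  have h2 : exp (-(t + 2 * c)) = exp (-t) * exp (-c) ^ 2 := by
    rw [← exp_nat_mul, ← exp_add]; ring_nf
  have h1 : exp (-(t + c)) = exp (-t) * exp (-c) := by rw [← exp_add]; ring_nf
  have : 0 < 1 + exp (-c) := by positivity
  unfold truncExpCDF
  rw [h2, h1]
  field_simp
  ring

lemma truncExpCDF_recursion (n k : ℕ) :
    truncExpCDF (((k + 1) / 2 : ℕ) / 2 ^ n) * (1 - digitProb n)
      + truncExpCDF ((k / 2 : ℕ) / 2 ^ n) * digitProb n = truncExpCDF (k / 2 ^ (n + 1)) := by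
  obtain ⟨m, rfl | rfl⟩ := Nat.even_or_odd' k
  · rw [show (2 * m + 1) / 2 = m by omega, show 2 * m / 2 = m by omega,
      ← natCast_div_two_pow_eq_two_mul]
    ring
  · rw [show (2 * m + 1 + 1) / 2 = m + 1 by omega, show (2 * m + 1) / 2 = m by omega,
      ← natCast_div_two_pow_add_digit]
    have h : ((m + 1 : ℕ) : ℝ) / 2 ^ n = m / 2 ^ n + 2 * digit n := by
      rw [digit, pow_succ]; push_cast; field_simp
    rw [h]
    exact truncExpCDF_add_two_mul _ _

lemma setLIntegral_Icc_truncExp {t : ℝ} (ht : 0 ≤ t) :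
    ∫⁻ x in Icc 0 t, ENNReal.ofReal (exp (-x) / (1 - exp (-1)))
      = ENNReal.ofReal (truncExpCDF t) := by
  rw [← ofReal_integral_eq_lintegral_ofReal, integral_div, integral_Icc_eq_integral_Ioc,
    ← intervalIntegral.integral_of_le ht, intervalIntegral.integral_comp_neg (f := exp),
    integral_exp, truncExpCDF, neg_zero, exp_zero]
  · exact (by fun_prop : Continuous fun x : ℝ => exp (-x) / (1 - exp (-1))).integrableOn_Icc
  · exact ae_of_all _ fun x => div_nonneg (exp_pos _).le one_sub_exp_neg_one_pos.le

lemma truncExpMeasure_apply {s : Set ℝ} (hs : MeasurableSet s) :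
    truncExpMeasure s = ∫⁻ x in s ∩ Icc 0 1, ENNReal.ofReal (exp (-x) / (1 - exp (-1))) := by
  rw [truncExpMeasure, withDensity_apply _ hs, Measure.restrict_restrict hs]

lemma truncExpMeasure_Iic {t : ℝ} (ht0 : 0 ≤ t) (ht1 : t ≤ 1) :
    truncExpMeasure (Iic t) = ENNReal.ofReal (truncExpCDF t) := by
  rw [truncExpMeasure_apply measurableSet_Iic, ← setLIntegral_Icc_truncExp ht0]
  congr 2
  ext x
  simp only [mem_inter_iff, mem_Iic, mem_Icc]
  constructor
  · rintro ⟨hxt, hx0, -⟩; exact ⟨hx0, hxt⟩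
  · rintro ⟨hx0, hxt⟩; exact ⟨hxt, hx0, hxt.trans ht1⟩

instance : IsProbabilityMeasure truncExpMeasure where
  measure_univ := by
    rw [truncExpMeasure_apply MeasurableSet.univ, univ_inter,
      setLIntegral_Icc_truncExp zero_le_one, truncExpCDF_one, ENNReal.ofReal_one]

section Probability

variable {Ω : Type*} [MeasurableSpace Ω] {μ : Measure Ω}

lemma ae_eq_or_eq_of_measure_add_eq_one [IsProbabilityMeasure μ] {Z : Ω → ℝ} (hZ : Measurable Z)
    {u v : ℝ} (huv : u ≠ v) (h : μ {ω | Z ω = u} + μ {ω | Z ω = v} = 1) :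
    ∀ᵐ ω ∂μ, Z ω = u ∨ Z ω = v := by
  have hdisj : Disjoint {ω | Z ω = u} {ω | Z ω = v} :=
    disjoint_left.2 fun ω hu hv => huv (hu.symm.trans hv)
  have hv : MeasurableSet {ω | Z ω = v} := hZ (measurableSet_singleton v)
  rw [← measure_union hdisj hv] at h
  exact ae_iff.2 ((prob_compl_eq_zero_iff ((hZ (measurableSet_singleton u)).union hv)).2 h)

lemma measure_lt_congr_of_ae_mem_grid {Y : Ω → ℝ} {N t : ℝ} (hN : 0 < N) {m : ℕ}
    (hY : ∀ᵐ ω ∂μ, ∃ i : ℕ, Y ω = i / N) (ht : ∀ i : ℕ, (i : ℝ) / N < t ↔ i < m) :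
    μ {ω | Y ω < t} = μ {ω | Y ω < m / N} := by
  refine measure_congr (eventuallyEq_set.2 ?_)
  filter_upwards [hY] with ω ⟨i, hi⟩
  simp only [hi, ht, div_lt_div_iff_of_pos_right hN, Nat.cast_lt]

lemma measure_add_lt_of_indepFun {Y Z : Ω → ℝ} (hY : Measurable Y) (hZ : Measurable Z)
    (hYZ : IndepFun Y Z μ) {d : ℝ} (hd : d ≠ 0) (hZd : ∀ᵐ ω ∂μ, Z ω = 0 ∨ Z ω = d) (t : ℝ) :
    μ {ω | Y ω + Z ω < t}
      = μ {ω | Y ω < t} * μ {ω | Z ω = 0} + μ {ω | Y ω < t - d} * μ {ω | Z ω = d} := by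
  have hsplit : {ω | Y ω + Z ω < t} =ᵐ[μ]
      ({ω | Y ω < t} ∩ {ω | Z ω = 0} ∪ {ω | Y ω < t - d} ∩ {ω | Z ω = d} : Set Ω) := by
    refine eventuallyEq_set.2 ?_
    filter_upwards [hZd] with ω hω
    rcases hω with h | h <;> simp [h, hd, hd.symm, lt_sub_iff_add_lt]
  have hdisj : Disjoint ({ω | Y ω < t} ∩ {ω | Z ω = 0}) ({ω | Y ω < t - d} ∩ {ω | Z ω = d}) :=
    disjoint_left.2 fun ω h0 hd' => hd (hd'.2.symm.trans h0.2)
  rw [measure_congr hsplit, measure_union hdisj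
      ((hY measurableSet_Iio).inter (hZ (measurableSet_singleton d)))]
  exact congrArg₂ (· + ·)
    (hYZ.measure_inter_preimage_eq_mul _ _ measurableSet_Iio (measurableSet_singleton 0))
    (hYZ.measure_inter_preimage_eq_mul _ _ measurableSet_Iio (measurableSet_singleton d))

variable {X : ℕ → Ω → ℝ}

lemma ae_isBinaryDigits [IsProbabilityMeasure μ] (hmeas : ∀ j, Measurable (X j))
    (hone : ∀ j, μ {ω | X j ω = digit j} = ENNReal.ofReal (digitProb j))
    (hzero : ∀ j, μ {ω | X j ω = 0} = ENNReal.ofReal (1 - digitProb j)) :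
    ∀ᵐ ω ∂μ, IsBinaryDigits fun j => X j ω :=
  ae_all_iff.2 fun j => ae_eq_or_eq_of_measure_add_eq_one (hmeas j) (digit_pos j).ne <| by
    rw [hzero, hone, ← ENNReal.ofReal_add (sub_nonneg.2 (digitProb_le_one j))
      (digitProb_nonneg j), sub_add_cancel, ENNReal.ofReal_one]

lemma measure_sum_range_succ_lt_eq (hmeas : ∀ j, Measurable (X j)) (hindep : iIndepFun X μ)
    (hdig : ∀ᵐ ω ∂μ, IsBinaryDigits fun j => X j ω)
    (hone : ∀ j, μ {ω | X j ω = digit j} = ENNReal.ofReal (digitProb j))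
    (hzero : ∀ j, μ {ω | X j ω = 0} = ENNReal.ofReal (1 - digitProb j)) (n k : ℕ) :
    μ {ω | ∑ j ∈ Finset.range (n + 1), X j ω < k / 2 ^ (n + 1)}
      = μ {ω | ∑ j ∈ Finset.range n, X j ω < ((k + 1) / 2 : ℕ) / 2 ^ n}
          * ENNReal.ofReal (1 - digitProb n)
        + μ {ω | ∑ j ∈ Finset.range n, X j ω < (k / 2 : ℕ) / 2 ^ n}
          * ENNReal.ofReal (digitProb n) := by
  have hgrid : ∀ᵐ ω ∂μ, ∃ i : ℕ, ∑ j ∈ Finset.range n, X j ω = i / 2 ^ n := by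
    filter_upwards [hdig] with ω hω using hω.exists_sum_range_eq n
  have hind : IndepFun (fun ω => ∑ j ∈ Finset.range n, X j ω) (X n) μ := by
    simpa only [Finset.sum_fn] using hindep.indepFun_finsetSum_of_notMem hmeas (by simp)
  simp only [Finset.sum_range_succ]
  rw [measure_add_lt_of_indepFun (Finset.measurable_sum _ fun j _ => hmeas j) (hmeas n) hind
      (digit_pos n).ne' (hdig.mono fun ω hω => hω n), hzero, hone,
    measure_lt_congr_of_ae_mem_grid (m := (k + 1) / 2) (by positivity) hgrid
      fun i => (natCast_div_two_pow_lt_iff i k n).trans (by omega),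
    measure_lt_congr_of_ae_mem_grid (m := k / 2) (by positivity) hgrid
      fun i => (natCast_div_two_pow_lt_sub_digit_iff i k n).trans (by omega)]

lemma measure_sum_range_lt_eq_truncExpCDF [IsProbabilityMeasure μ]
    (hmeas : ∀ j, Measurable (X j)) (hindep : iIndepFun X μ)
    (hdig : ∀ᵐ ω ∂μ, IsBinaryDigits fun j => X j ω)
    (hone : ∀ j, μ {ω | X j ω = digit j} = ENNReal.ofReal (digitProb j))
    (hzero : ∀ j, μ {ω | X j ω = 0} = ENNReal.ofReal (1 - digitProb j)) (n : ℕ) :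
    ∀ k : ℕ, k ≤ 2 ^ n → μ {ω | ∑ j ∈ Finset.range n, X j ω < k / 2 ^ n}
      = ENNReal.ofReal (truncExpCDF (k / 2 ^ n)) := by
  induction n with
  | zero =>
    intro k hk
    interval_cases k <;> simp [truncExpCDF_zero, truncExpCDF_one]
  | succ n ih =>
    intro k hk
    have h2 : 2 ^ (n + 1) = 2 * 2 ^ n := pow_succ' 2 n
    have hF : ∀ i : ℕ, 0 ≤ truncExpCDF (i / 2 ^ n) := fun i => truncExpCDF_nonneg (by positivity)
    rw [measure_sum_range_succ_lt_eq hmeas hindep hdig hone hzero, ih _ (by omega),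
      ih _ (by omega),
      ← ENNReal.ofReal_mul (hF _), ← ENNReal.ofReal_mul (hF _),
      ← ENNReal.ofReal_add (mul_nonneg (hF _) (sub_nonneg.2 (digitProb_le_one n)))
        (mul_nonneg (hF _) (digitProb_nonneg n)), truncExpCDF_recursion]

lemma measure_tsum_le_eq_truncExpCDF [IsProbabilityMeasure μ]
    (hmeas : ∀ j, Measurable (X j)) (hindep : iIndepFun X μ)
    (hdig : ∀ᵐ ω ∂μ, IsBinaryDigits fun j => X j ω)
    (hone : ∀ j, μ {ω | X j ω = digit j} = ENNReal.ofReal (digitProb j))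
    (hzero : ∀ j, μ {ω | X j ω = 0} = ENNReal.ofReal (1 - digitProb j))
    {x : ℝ} (hx0 : 0 ≤ x) (hx1 : x < 1) :
    μ {ω | ∑' j, X j ω ≤ x} = ENNReal.ofReal (truncExpCDF x) := by
  set k : ℕ → ℕ := fun n => ⌊x * 2 ^ n⌋₊
  have hk_le : ∀ n, (k n : ℝ) / 2 ^ n ≤ x := fun n => by
    rw [div_le_iff₀ (by positivity)]; exact Nat.floor_le (by positivity)
  have hk_lt : ∀ n, x < (k n + 1 : ℕ) / 2 ^ n := fun n => by
    rw [lt_div_iff₀ (by positivity)]; push_cast; exact Nat.lt_floor_add_one _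
  have hk_bound : ∀ n, k n < 2 ^ n := fun n => by
    refine (Nat.floor_lt (by positivity)).2 ?_
    push_cast
    exact mul_lt_of_lt_one_left (by positivity) hx1
  have hlower : ∀ n, ENNReal.ofReal (truncExpCDF (k n / 2 ^ n)) ≤ μ {ω | ∑' j, X j ω ≤ x} :=
    fun n => by
      rw [← measure_sum_range_lt_eq_truncExpCDF hmeas hindep hdig hone hzero n (k n)
        (hk_bound n).le]
      refine measure_mono_ae ?_
      filter_upwards [hdig] with ω hω hS
      exact (hω.tsum_le_of_sum_range_lt hS).trans (hk_le n)
  have hupper : ∀ n, μ {ω | ∑' j, X j ω ≤ x}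
      ≤ ENNReal.ofReal (truncExpCDF ((k n + 1 : ℕ) / 2 ^ n)) := fun n => by
    rw [← measure_sum_range_lt_eq_truncExpCDF hmeas hindep hdig hone hzero n (k n + 1)
      (hk_bound n)]
    refine measure_mono_ae ?_
    filter_upwards [hdig] with ω hω hX
    exact ((hω.sum_range_le_tsum n).trans hX).trans_lt (hk_lt n)
  have h2pow : Tendsto (fun n : ℕ => (2 : ℝ) ^ n) atTop atTop :=
    tendsto_pow_atTop_atTop_of_one_lt one_lt_two
  have hlim : Tendsto (fun n => (k n : ℝ) / 2 ^ n) atTop (𝓝 x) :=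
    (tendsto_nat_floor_mul_div_atTop hx0).comp h2pow
  have hlim' : Tendsto (fun n => ((k n + 1 : ℕ) : ℝ) / 2 ^ n) atTop (𝓝 x) := by
    simpa [add_div] using hlim.add (tendsto_inv_atTop_zero.comp h2pow)
  have hF := (ENNReal.continuous_ofReal.comp continuous_truncExpCDF).tendsto x
  exact le_antisymm (ge_of_tendsto' (hF.comp hlim') hupper)
    (le_of_tendsto' (hF.comp hlim) hlower)

lemma aemeasurable_tsum (hmeas : ∀ j, Measurable (X j))
    (hdig : ∀ᵐ ω ∂μ, IsBinaryDigits fun j => X j ω) :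
    AEMeasurable (fun ω => ∑' j, X j ω) μ :=
  aemeasurable_of_tendsto_metrizable_ae'
    (fun n => (Finset.measurable_sum (Finset.range n) fun j _ => hmeas j).aemeasurable)
    (by filter_upwards [hdig] with ω hω using hω.summable.hasSum.tendsto_sum_nat)

theorem map_tsum_eq_truncExpMeasure [IsProbabilityMeasure μ] (hmeas : ∀ j, Measurable (X j))
    (hindep : iIndepFun X μ)
    (hone : ∀ j, μ {ω | X j ω = digit j} = ENNReal.ofReal (digitProb j))
    (hzero : ∀ j, μ {ω | X j ω = 0} = ENNReal.ofReal (1 - digitProb j)) :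
    μ.map (fun ω => ∑' j, X j ω) = truncExpMeasure := by
  have hdig := ae_isBinaryDigits hmeas hone hzero
  have hX := aemeasurable_tsum hmeas hdig
  have := Measure.isProbabilityMeasure_map (μ := μ) hX
  have hcdf : ∀ x, 0 ≤ x → x < 1 →
      μ.map (fun ω => ∑' j, X j ω) (Iic x) = truncExpMeasure (Iic x) := fun x hx0 hx1 => by
    rw [Measure.map_apply_of_aemeasurable hX measurableSet_Iic, truncExpMeasure_Iic hx0 hx1.le]
    exact measure_tsum_le_eq_truncExpCDF hmeas hindep hdig hone hzero hx0 hx1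
  refine Measure.ext_of_Iic _ _ fun x => ?_
  rcases lt_or_ge x 0 with hx0 | hx0
  · have hρ0 : truncExpMeasure (Iic 0) = 0 := by
      rw [truncExpMeasure_Iic le_rfl zero_le_one, truncExpCDF_zero, ENNReal.ofReal_zero]
    have hν0 := (hcdf 0 le_rfl one_pos).trans hρ0
    rw [measure_mono_null (Iic_subset_Iic.2 hx0.le) hν0,
      measure_mono_null (Iic_subset_Iic.2 hx0.le) hρ0]
  rcases lt_or_ge x 1 with hx1 | hx1
  · exact hcdf x hx0 hx1
  have hle : ∀ᵐ y ∂μ.map (fun ω => ∑' j, X j ω), y ≤ x :=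
    (ae_map_iff hX measurableSet_Iic).2 <| by
      filter_upwards [hdig] with ω hω using hω.tsum_le_one.trans hx1
  have hρ : truncExpMeasure (Iic x) = 1 := le_antisymm prob_le_one <| by
    rw [← ENNReal.ofReal_one, ← truncExpCDF_one, ← truncExpMeasure_Iic zero_le_one le_rfl]
    exact measure_mono (Iic_subset_Iic.2 hx1)
  rw [hρ, ← measure_univ (μ := μ.map fun ω => ∑' j, X j ω)]
  exact (ae_iff_measure_eq measurableSet_Iic.nullMeasurableSet).1 hle

end Probability

end BernoulliConvolution

open BernoulliConvolution

/-- let `p_j = e^{−2^{−j}}/(1 + e^{−2^{−j}})` for `j ≥ 1` (here the index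
`j : ℕ` stands for `j+1`), and let `(X_j)` be independent with
`P(X_j = 2^{−j}) = p_j`, `P(X_j = 0) = 1 − p_j`.  Then `X = Σ_j X_j` is absolutely
continuous with density `e^{−x}/(1 − e^{−1})` on `[0,1]` (and `0` elsewhere), i.e. it is
a truncated exponential random variable on `[0,1]`. -/
theorem bernoulli_convolution_truncated_exponential
    {Ω : Type} [MeasurableSpace Ω] (μ : Measure Ω) [IsProbabilityMeasure μ]
    (X : ℕ → Ω → ℝ) (hmeas : ∀ j, Measurable (X j))
    (hindep : ProbabilityTheory.iIndepFun X μ)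
    (hone : ∀ j : ℕ,
      μ {ω | X j ω = ((2 : ℝ) ^ (j + 1))⁻¹}
        = ENNReal.ofReal (Real.exp (-((2 : ℝ) ^ (j + 1))⁻¹)
            / (1 + Real.exp (-((2 : ℝ) ^ (j + 1))⁻¹))))
    (hzero : ∀ j : ℕ,
      μ {ω | X j ω = 0}
        = ENNReal.ofReal (1 - Real.exp (-((2 : ℝ) ^ (j + 1))⁻¹)
            / (1 + Real.exp (-((2 : ℝ) ^ (j + 1))⁻¹)))) :
    ∀ s : Set ℝ, MeasurableSet s →
      μ {ω | (∑' j : ℕ, X j ω) ∈ s}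
        = ∫⁻ x in s ∩ Set.Icc (0 : ℝ) 1,
            ENNReal.ofReal (Real.exp (-x) / (1 - Real.exp (-1))) := by
  intro s hs
  have hX := aemeasurable_tsum hmeas (ae_isBinaryDigits hmeas hone hzero)
  calc μ {ω | (∑' j : ℕ, X j ω) ∈ s}
      = μ.map (fun ω => ∑' j, X j ω) s := (Measure.map_apply_of_aemeasurable hX hs).symm
    _ = truncExpMeasure s := by rw [map_tsum_eq_truncExpMeasure hmeas hindep hone hzero]
    _ = _ := truncExpMeasure_apply hs
end

section
/- Let z ∈ ℂ with Re z ≠ 0. Then for every n ≥ 1, ∏_{j=1}^n (e^{z/2^j} + 1) = (e^z − 1)/(e^{z/2^n} − 1), and consequently lim_{n→∞} ∏_{j=1}^n (e^{z/2^j} + 1)/(e^{−1/2^j} + 1) = (e^z − 1) / ( z·(1 − e^{−1}) ). In particular, with z = −1 + it for t ∈ ℝ, the limit equals the Fourier transform ∫_0^1 e^{itx}·e^{−x}/(1 − e^{−1}) dx of the truncated exponential density. -/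
/-!
Since `(e^{w/2} - 1)(e^{w/2} + 1) = e^w - 1`, multiplying the product by `e^{z/2^n} - 1`
telescopes to `e^z - 1`, and `Re z ≠ 0` keeps every `e^{z/2^n}` away from `1`. A ratio of two
such products is therefore `(e^z - 1)/(e^u - 1)` times `2^n (e^{u/2^n} - 1) / (2^n (e^{z/2^n} - 1))`,
and `2^n (e^{w/2^n} - 1) → w` because it is a difference quotient of `h ↦ e^{hw}` at `0`.
For `z = -1 + it` the integrand is `e^{zx}/(1 - e^{-1})`, whose integral over `[0,1]` is
`(e^z - 1)/(z (1 - e^{-1}))`.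
-/

open Complex Filter Topology Finset

namespace Complex

theorem exp_ne_one_of_re_ne_zero {w : ℂ} (hw : w.re ≠ 0) : exp w ≠ 1 := by
  intro h
  have : Real.exp w.re = 1 := by rw [← norm_exp, h, norm_one]
  exact hw (Real.exp_eq_one_iff _ |>.mp this)

theorem re_div_two_pow (w : ℂ) (n : ℕ) : (w / 2 ^ n).re = w.re / 2 ^ n := by
  simpa using div_natCast_re w (2 ^ n)

theorem exp_half_sub_one_mul_exp_half_add_one (w : ℂ) :
    (exp (w / 2) - 1) * (exp (w / 2) + 1) = exp w - 1 := by
  have h : exp (w / 2) * exp (w / 2) = exp w := by rw [← exp_add, add_halves]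
  linear_combination h

theorem exp_div_two_pow_sub_one_mul_prod (w : ℂ) (n : ℕ) :
    (exp (w / 2 ^ n) - 1) * ∏ j ∈ Icc 1 n, (exp (w / 2 ^ j) + 1) = exp w - 1 := by
  induction n with
  | zero => simp
  | succ n ih =>
    rw [prod_Icc_succ_top (by omega), ← ih, ← exp_half_sub_one_mul_exp_half_add_one (w / 2 ^ n),
      div_div, ← pow_succ]
    ring

theorem prod_exp_div_two_pow_add_one {w : ℂ} {n : ℕ} (hw : exp (w / 2 ^ n) ≠ 1) :
    ∏ j ∈ Icc 1 n, (exp (w / 2 ^ j) + 1) = (exp w - 1) / (exp (w / 2 ^ n) - 1) :=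
  eq_div_of_mul_eq (sub_ne_zero.mpr hw) (by rw [mul_comm, exp_div_two_pow_sub_one_mul_prod])

theorem tendsto_two_pow_mul_exp_div_two_pow_sub_one (w : ℂ) :
    Tendsto (fun n : ℕ => 2 ^ n * (exp (w / 2 ^ n) - 1)) atTop (𝓝 w) := by
  have hderiv : HasDerivAt (fun h : ℂ => exp (h * w)) w 0 := by
    simpa using ((hasDerivAt_id (0 : ℂ)).mul_const w).cexp
  have hslope := hasDerivAt_iff_tendsto_slope.mp hderiv
  have hinv : Tendsto (fun n : ℕ => ((2 : ℂ) ^ n)⁻¹) atTop (𝓝[≠] 0) := by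
    refine tendsto_nhdsWithin_of_tendsto_nhds_of_eventually_within _ ?_ (by simp)
    simpa [inv_pow] using tendsto_pow_atTop_nhds_zero_of_norm_lt_one
      (show ‖(2 : ℂ)⁻¹‖ < 1 by norm_num)
  refine (hslope.comp hinv).congr fun n => ?_
  simp [slope_def_field, div_eq_inv_mul]

theorem tendsto_prod_exp_div_two_pow_add_one_div {w u : ℂ} (hw : w.re ≠ 0) (hu : u.re ≠ 0) :
    Tendsto (fun n : ℕ => ∏ j ∈ Icc 1 n, (exp (w / 2 ^ j) + 1) / (exp (u / 2 ^ j) + 1)) atTop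
      (𝓝 ((exp w - 1) / (exp u - 1) * (u / w))) := by
  have hw0 : w ≠ 0 := fun h => hw (by simp [h])
  have hlim := (tendsto_two_pow_mul_exp_div_two_pow_sub_one u).div
    (tendsto_two_pow_mul_exp_div_two_pow_sub_one w) hw0
  refine (hlim.const_mul ((exp w - 1) / (exp u - 1))).congr fun n => ?_
  have hne : ∀ v : ℂ, v.re ≠ 0 → exp (v / 2 ^ n) ≠ 1 := fun v hv =>
    exp_ne_one_of_re_ne_zero (by rw [re_div_two_pow]; positivity)
  rw [prod_div_distrib, prod_exp_div_two_pow_add_one (hne w hw),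
    prod_exp_div_two_pow_add_one (hne u hu), Pi.div_apply,
    mul_div_mul_left _ _ (pow_ne_zero n two_ne_zero), div_div_div_eq, div_mul_div_comm,
    mul_comm (exp u - 1)]

end Complex

theorem integral_exp_mul_complex_zero_one {c : ℂ} (hc : c ≠ 0) :
    ∫ x in (0 : ℝ)..1, exp (c * x) = (exp c - 1) / c := by
  simp [integral_exp_mul_complex hc]

/-- for `z ∈ ℂ` with `Re z ≠ 0`, the telescoping product identity
`∏_{j=1}^n (e^{z/2^j} + 1) = (e^z − 1)/(e^{z/2^n} − 1)` holds for all `n ≥ 1`;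
consequently `∏_{j=1}^n (e^{z/2^j} + 1)/(e^{−1/2^j} + 1) → (e^z − 1)/(z·(1 − e^{−1}))`,
and with `z = −1 + it` the limit is the Fourier transform
`∫_0^1 e^{itx} e^{−x}/(1 − e^{−1}) dx` of the truncated exponential density. -/
theorem truncated_exponential_product_identity
    (z : ℂ) (hz : z.re ≠ 0) :
    (∀ n : ℕ, 1 ≤ n →
        (∏ j ∈ Finset.Icc 1 n, (Complex.exp (z / 2 ^ j) + 1))
          = (Complex.exp z - 1) / (Complex.exp (z / 2 ^ n) - 1)) ∧
    Filter.Tendsto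
        (fun n : ℕ =>
          ∏ j ∈ Finset.Icc 1 n,
            (Complex.exp (z / 2 ^ j) + 1) / (Complex.exp (-1 / 2 ^ j) + 1))
        Filter.atTop
        (nhds ((Complex.exp z - 1) / (z * (1 - Complex.exp (-1))))) ∧
    (∀ t : ℝ, z = -1 + Complex.I * t →
        (Complex.exp z - 1) / (z * (1 - Complex.exp (-1)))
          = ∫ x in (0 : ℝ)..1,
              Complex.exp (Complex.I * t * x) * Complex.exp (-x) / (1 - Complex.exp (-1))) := by
  have hz0 : z ≠ 0 := fun h => hz (by simp [h])
  refine ⟨fun n _ => prod_exp_div_two_pow_add_one (exp_ne_one_of_re_ne_zero ?_), ?_, ?_⟩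
  · rw [re_div_two_pow]; positivity
  · convert tendsto_prod_exp_div_two_pow_add_one_div hz (u := -1) (by simp) using 2
    have he : exp (-1 : ℂ) - 1 ≠ 0 := sub_ne_zero.mpr (exp_ne_one_of_re_ne_zero (by simp))
    have he' : 1 - exp (-1 : ℂ) ≠ 0 := by rwa [← neg_sub, neg_ne_zero]
    field_simp
    ring
  · intro t ht
    have hcomb : ∀ x : ℝ, exp (I * t * x) * exp (-x) = exp (z * x) := fun x => by
      rw [← exp_add, ht]; ring_nf
    simp only [hcomb, intervalIntegral.integral_div, integral_exp_mul_complex_zero_one hz0]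
    rw [div_div, mul_comm]
end
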